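/- arXiv:1806.07654 — 6 statements merged into one kernel-verified Lean document; each statement's English description precedes it below -/
import Mathlib

section
/- For every δ ∈ (0,T], the function h_δ : Ω → ℝ defined by h_δ(ω) := inf{ s ∈ (0,T] : s + sup_{r∈[0,s]} |ω(r)| ≥ δ } is well defined (the set is nonempty, the infimum is attained, and 0 < h_δ(ω) ≤ δ) and is continuous on Ω with respect to the uniform norm |·|_∞. -/
noncomputable section

open MeasureTheory Filter

/-- `ℝ^m` with the Euclidean norm. -/
abbrev Em (m : ℕ) : Type := EuclideanSpace ℝ (Fin m)

/-- The path space `Ω`: continuous functions on `[0,T]` with values in `ℝ^m` vanishing at `0`,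
equipped with the uniform norm (inherited from `C([0,T], ℝ^m)`). -/
abbrev PathSp (m : ℕ) (T : ℝ) : Type :=
  {ω : C(Set.Icc (0:ℝ) T, Em m) // ∀ s : Set.Icc (0:ℝ) T, (s : ℝ) = 0 → ω s = 0}

/-- `sup_{r ∈ [0,s]} |ω(r)|` (written as a sup over `[0,T]` of values truncated to `0`
outside `[0,s]`; the two agree since `|ω(0)| = 0`). -/
def supTo {m : ℕ} {T : ℝ} (ω : PathSp m T) (s : ℝ) : ℝ :=
  ⨆ r : Set.Icc (0:ℝ) T, if (r : ℝ) ≤ s then ‖ω.val r‖ else 0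

/-- The set `{ s ∈ (0,T] : s + sup_{r∈[0,s]} |ω(r)| ≥ δ }`. -/
def stopSet {m : ℕ} {T : ℝ} (δ : ℝ) (ω : PathSp m T) : Set ℝ :=
  {s : ℝ | s ∈ Set.Ioc (0:ℝ) T ∧ δ ≤ s + supTo ω s}

/-- `h_δ(ω) = inf { s ∈ (0,T] : s + sup_{r∈[0,s]} |ω(r)| ≥ δ }`. -/
def hdelta {m : ℕ} {T : ℝ} (δ : ℝ) (ω : PathSp m T) : ℝ :=
  sInf (stopSet δ ω)

section aux
variable {m : ℕ} {T : ℝ}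

lemma supTo_bdd (ω : PathSp m T) (s : ℝ) :
    BddAbove (Set.range fun r : Set.Icc (0:ℝ) T => if (r : ℝ) ≤ s then ‖ω.val r‖ else 0) := by
  refine ⟨‖ω.val‖, ?_⟩
  rintro x ⟨r, rfl⟩
  dsimp only
  split
  · exact ω.val.norm_coe_le_norm r
  · exact norm_nonneg _

lemma supTo_nonneg (ω : PathSp m T) (s : ℝ) : 0 ≤ supTo ω s :=
  Real.iSup_nonneg fun r => by split
                               · exact norm_nonneg _
                               · exact le_rfl

lemma supTo_mono (ω : PathSp m T) : Monotone (supTo ω) := by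
  intro s s' hss
  refine ciSup_mono (supTo_bdd ω s') fun r => ?_
  by_cases hr : (r : ℝ) ≤ s
  · rw [if_pos hr, if_pos (hr.trans hss)]
  · rw [if_neg hr]
    split
    · exact norm_nonneg _
    · exact le_rfl

lemma le_supTo (ω : PathSp m T) {s : ℝ} (r : Set.Icc (0:ℝ) T) (hr : (r : ℝ) ≤ s) :
    ‖ω.val r‖ ≤ supTo ω s := by
  have h := le_ciSup (supTo_bdd ω s) r
  rwa [if_pos hr] at h

lemma supTo_le (hT : 0 ≤ T) (ω : PathSp m T) {s B : ℝ} (hB0 : 0 ≤ B)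
    (hB : ∀ r : Set.Icc (0:ℝ) T, (r : ℝ) ≤ s → ‖ω.val r‖ ≤ B) : supTo ω s ≤ B := by
  haveI : Nonempty (Set.Icc (0:ℝ) T) := ⟨⟨0, le_rfl, hT⟩⟩
  refine ciSup_le fun r => ?_
  split
  · exact hB r ‹_›
  · exact hB0

lemma supTo_comp (hT : 0 ≤ T) (ω ω' : PathSp m T) (s : ℝ) :
    supTo ω s ≤ supTo ω' s + dist ω ω' := by
  refine supTo_le hT ω (add_nonneg (supTo_nonneg ω' s) dist_nonneg) fun r hr => ?_
  have h1 := norm_sub_norm_le (ω.val r) (ω'.val r)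
  have h2 : ‖ω.val r - ω'.val r‖ ≤ dist ω ω' := by
    rw [← dist_eq_norm, Subtype.dist_eq]
    exact ContinuousMap.dist_apply_le_dist r
  have h3 : ‖ω'.val r‖ ≤ supTo ω' s := le_supTo ω' r hr
  linarith

lemma supTo_right (hT : 0 ≤ T) (ω : PathSp m T) {ε : ℝ} (hε : 0 < ε) :
    ∃ η > 0, ∀ s0 : ℝ, 0 ≤ s0 → s0 ≤ T → supTo ω (s0 + η) ≤ supTo ω s0 + ε := by
  have huc : UniformContinuous ω.val :=
    CompactSpace.uniformContinuous_of_continuous ω.val.continuous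
  rw [Metric.uniformContinuous_iff] at huc
  obtain ⟨η, hη, h⟩ := huc ε hε
  refine ⟨η/2, by positivity, fun s0 hs0 hs0T => ?_⟩
  have hmem : s0 ∈ Set.Icc (0:ℝ) T := ⟨hs0, hs0T⟩
  refine supTo_le hT ω (add_nonneg (supTo_nonneg ω s0) hε.le) fun r hr => ?_
  by_cases hrs : (r : ℝ) ≤ s0
  · exact le_add_of_le_of_nonneg (le_supTo ω r hrs) hε.le
  · push_neg at hrs
    have hd : dist r (⟨s0, hmem⟩ : Set.Icc (0:ℝ) T) < η := by
      rw [Subtype.dist_eq, Real.dist_eq, abs_of_nonneg (by simp; linarith)]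
      simp only
      linarith
    have h5 := h hd
    rw [dist_eq_norm] at h5
    have h3 : ‖ω.val ⟨s0, hmem⟩‖ ≤ supTo ω s0 := le_supTo ω ⟨s0, hmem⟩ le_rfl
    have h4 := norm_sub_norm_le (ω.val r) (ω.val ⟨s0, hmem⟩)
    linarith

lemma supTo_zero (hT : 0 ≤ T) (ω : PathSp m T) : supTo ω 0 = 0 := by
  refine le_antisymm (supTo_le hT ω le_rfl fun r hr => ?_) (supTo_nonneg ω 0)
  have h0 : (r : ℝ) = 0 := le_antisymm hr r.2.1
  rw [ω.2 r h0, norm_zero]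

lemma supTo_small (hT : 0 ≤ T) (ω : PathSp m T) {ε : ℝ} (hε : 0 < ε) :
    ∃ η > 0, supTo ω η ≤ ε := by
  obtain ⟨η, hη, h⟩ := supTo_right hT ω hε
  refine ⟨η, hη, ?_⟩
  have := h 0 le_rfl hT
  rwa [zero_add, supTo_zero hT ω, zero_add] at this

end aux

/-- for every `δ ∈ (0,T]`, the function `h_δ` is well defined
(the set is nonempty, its infimum is attained, and `0 < h_δ(ω) ≤ δ`), and `h_δ` is
continuous on `Ω` with respect to the uniform norm. -/
theorem stmt1 (m : ℕ) (hm : 1 ≤ m) (T : ℝ) (hT : 0 < T)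
    (δ : ℝ) (hδ : δ ∈ Set.Ioc (0:ℝ) T) :
    (∀ ω : PathSp m T,
      (stopSet δ ω).Nonempty ∧
      hdelta δ ω ∈ stopSet δ ω ∧
      0 < hdelta δ ω ∧ hdelta δ ω ≤ δ) ∧
    Continuous (fun ω : PathSp m T => hdelta δ ω) := by
  obtain ⟨hδ0, hδT⟩ := hδ
  have hT0 : (0:ℝ) ≤ T := hT.le
  have hδmem : ∀ ω : PathSp m T, δ ∈ stopSet δ ω := fun ω =>
    ⟨⟨hδ0, hδT⟩, le_add_of_nonneg_right (supTo_nonneg ω δ)⟩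
  have hne : ∀ ω : PathSp m T, (stopSet δ ω).Nonempty := fun ω => ⟨δ, hδmem ω⟩
  have hbdd : ∀ ω : PathSp m T, BddBelow (stopSet δ ω) := fun ω =>
    ⟨0, fun s hs => hs.1.1.le⟩
  have hle : ∀ ω : PathSp m T, hdelta δ ω ≤ δ := fun ω => csInf_le (hbdd ω) (hδmem ω)
  have hpos : ∀ ω : PathSp m T, 0 < hdelta δ ω := by
    intro ω
    obtain ⟨s0, hs0, hs0le⟩ := supTo_small hT0 ω (half_pos hδ0)
    have hc : 0 < min s0 (δ/2) := lt_min hs0 (half_pos hδ0)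
    refine lt_of_lt_of_le hc (le_csInf (hne ω) fun s hs => ?_)
    by_contra hlt
    push_neg at hlt
    have h1 : supTo ω s ≤ δ/2 :=
      (supTo_mono ω (le_of_lt (lt_of_lt_of_le hlt (min_le_left _ _)))).trans hs0le
    have h2 : s < δ/2 := lt_of_lt_of_le hlt (min_le_right _ _)
    have h3 := hs.2
    linarith
  have hmem : ∀ ω : PathSp m T, hdelta δ ω ∈ stopSet δ ω := by
    intro ω
    refine ⟨⟨hpos ω, (hle ω).trans hδT⟩, ?_⟩
    refine le_of_forall_pos_le_add fun ε hε => ?_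
    obtain ⟨η, hη, hr⟩ := supTo_right hT0 ω (half_pos hε)
    have hlt : sInf (stopSet δ ω) < hdelta δ ω + min η (ε/2) := by
      have := lt_min hη (half_pos hε)
      unfold hdelta
      linarith
    obtain ⟨s, hsS, hslt⟩ := exists_lt_of_csInf_lt (hne ω) hlt
    have hsup : supTo ω s ≤ supTo ω (hdelta δ ω) + ε/2 := by
      have m1 : supTo ω s ≤ supTo ω (hdelta δ ω + η) :=
        supTo_mono ω (by have := min_le_left η (ε/2); linarith)
      exact m1.trans (hr (hdelta δ ω) (hpos ω).le ((hle ω).trans hδT))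
    have h6 := hsS.2
    have hsle : s ≤ hdelta δ ω + ε/2 := by have := min_le_right η (ε/2); linarith
    linarith
  have key : ∀ ω ω' : PathSp m T, hdelta δ ω ≤ hdelta δ ω' + dist ω ω' := by
    intro ω ω'
    have hsS := hmem ω'
    rcases le_or_gt (hdelta δ ω' + dist ω ω') T with hcase | hcase
    · refine csInf_le (hbdd ω) ⟨⟨?_, hcase⟩, ?_⟩
      · exact lt_of_lt_of_le (hpos ω') (le_add_of_nonneg_right dist_nonneg)
      · have c1 : supTo ω' (hdelta δ ω') ≤ supTo ω (hdelta δ ω') + dist ω' ω :=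
          supTo_comp hT0 ω' ω _
        have c2 : supTo ω (hdelta δ ω') ≤ supTo ω (hdelta δ ω' + dist ω ω') :=
          supTo_mono ω (le_add_of_nonneg_right dist_nonneg)
        have h7 := hsS.2
        rw [dist_comm] at c1
        linarith
    · have h8 := hle ω
      linarith
  refine ⟨fun ω => ⟨hne ω, hmem ω, hpos ω, hle ω⟩, ?_⟩
  have hlip : LipschitzWith 1 (fun ω : PathSp m T => hdelta δ ω) := by
    refine LipschitzWith.of_dist_le_mul fun ω ω' => ?_
    rw [NNReal.coe_one, one_mul, Real.dist_eq, abs_sub_le_iff]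
    constructor
    · linarith [key ω ω']
    · have h9 := key ω' ω
      rw [dist_comm] at h9
      linarith
  exact hlip.continuous
end
end

section
/- Fix 1 ≤ p < ∞. For every sequence (t_n,ω_n) in Θ and every (t,ω) ∈ Θ, one has d_p((t_n,ω_n),(t,ω)) → 0 if and only if ←d_p((t_n,ω_n),(t,ω)) → 0; in other words, the pseudo-metrics d_p and ←d_p induce the same topology on Θ (the identity map (Θ, ←d_p) → (Θ, d_p) is a homeomorphism). -/
noncomputable section

open MeasureTheory Filter

/-- `Θ = [0,T] × Ω`. -/
abbrev ThetaSp (m : ℕ) (T : ℝ) : Type := Set.Icc (0:ℝ) T × PathSp m T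

/-- Evaluation of a path at an arbitrary real time, extended by `0` outside `[0,T]`
(in particular `ω(s) = 0` for `s < 0`). -/
def ev {m : ℕ} {T : ℝ} (ω : PathSp m T) (r : ℝ) : Em m :=
  if h : r ∈ Set.Icc (0:ℝ) T then ω.val ⟨r, h⟩ else 0

/-- The backward pseudometric `←d_p` on `Θ`:
`←d_p((t,ω),(t',ω')) = |t−t'| + |ω(t)−ω'(t')| + (∫_0^T |ω(t−s)−ω'(t'−s)|^p ds)^{1/p}`,
with paths extended by `0` to negative times. -/
def dLp {m : ℕ} {T : ℝ} (p : ℝ) (θ θ' : ThetaSp m T) : ℝ :=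
  |(θ.1 : ℝ) - (θ'.1 : ℝ)| + ‖ev θ.2 (θ.1 : ℝ) - ev θ'.2 (θ'.1 : ℝ)‖ +
    (∫ s in (0:ℝ)..T, ‖ev θ.2 ((θ.1 : ℝ) - s) - ev θ'.2 ((θ'.1 : ℝ) - s)‖ ^ p) ^ (1 / p)

/-- The pseudometric `d_p` on `Θ`:
`d_p((t,ω),(t',ω')) = |t−t'| + (∫_0^{T+1} |ω(t∧s)−ω'(t'∧s)|^p ds)^{1/p}`. -/
def dPmetric {m : ℕ} {T : ℝ} (p : ℝ) (θ θ' : ThetaSp m T) : ℝ :=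
  |(θ.1 : ℝ) - (θ'.1 : ℝ)| +
    (∫ s in (0:ℝ)..(T + 1),
      ‖ev θ.2 (min (θ.1 : ℝ) s) - ev θ'.2 (min (θ'.1 : ℝ) s)‖ ^ p) ^ (1 / p)

/-! Extend paths continuously to `ℝ` (by `0` at negative times, by their final value after `T`)
and put `g = ωₙ - ω`. Replacing `ω(t ∧ s)` by `ω(tₙ ∧ s)` and `ω(t - s)` by `ω(tₙ - s)` costs an
`L^p` error that vanishes as `tₙ → t` by continuity of `ω`, and `‖x‖^p ≤ 2^p (‖x - y‖^p + ‖y‖^p)`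
makes such errors harmless. After the replacement, the integral over `[0,T]` in `d_p` is
`∫₀^{tₙ} ‖g‖^p + (T - tₙ) ‖g(tₙ)‖^p`, its part over `[T, T+1]` is `‖ωₙ(tₙ) - ω(t)‖^p`, and the
integral in `←d_p` is `∫₀^{tₙ} ‖g‖^p` because `g` vanishes at negative times. So both pseudometrics
tend to `0` exactly when `tₙ → t`, `ωₙ(tₙ) → ω(t)` and `∫₀^{tₙ} ‖ωₙ - ω‖^p → 0`. -/

open Set Topology

section Sequences

variable {ι : Type*} {l : Filter ι}

lemma tendsto_add_nhds_zero_iff_of_nonneg {a b : ι → ℝ} (ha : ∀ i, 0 ≤ a i) (hb : ∀ i, 0 ≤ b i) :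
    Tendsto (fun i => a i + b i) l (𝓝 0) ↔ Tendsto a l (𝓝 0) ∧ Tendsto b l (𝓝 0) :=
  ⟨fun h => ⟨squeeze_zero ha (fun i => le_add_of_nonneg_right (hb i)) h,
      squeeze_zero hb (fun i => le_add_of_nonneg_left (ha i)) h⟩,
    fun h => by simpa using h.1.add h.2⟩

lemma tendsto_rpow_nhds_zero_iff {a : ι → ℝ} (ha : ∀ i, 0 ≤ a i) {q : ℝ} (hq : 0 < q) :
    Tendsto (fun i => a i ^ q) l (𝓝 0) ↔ Tendsto a l (𝓝 0) := by
  have rpow_tendsto : ∀ {r : ℝ}, 0 < r → ∀ {b : ι → ℝ}, Tendsto b l (𝓝 0) →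
      Tendsto (fun i => b i ^ r) l (𝓝 0) := fun hr _ hb => by
    simpa [Real.zero_rpow hr.ne'] using hb.rpow_const (Or.inr hr.le)
  refine ⟨fun h => ?_, rpow_tendsto hq⟩
  simpa [Real.rpow_rpow_inv (ha _) hq.ne'] using rpow_tendsto (inv_pos.2 hq) h

lemma tendsto_nhds_zero_iff_of_le_mul_add {x y e : ι → ℝ} {C : ℝ}
    (hx : ∀ i, 0 ≤ x i) (hy : ∀ i, 0 ≤ y i)
    (hxy : ∀ i, x i ≤ C * (e i + y i)) (hyx : ∀ i, y i ≤ C * (e i + x i))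
    (he : Tendsto e l (𝓝 0)) :
    Tendsto x l (𝓝 0) ↔ Tendsto y l (𝓝 0) := by
  have bound : ∀ {z : ι → ℝ}, Tendsto z l (𝓝 0) →
      Tendsto (fun i => C * (e i + z i)) l (𝓝 0) := fun hz => by
    simpa using (he.add hz).const_mul C
  exact ⟨fun h => squeeze_zero hy hyx (bound h), fun h => squeeze_zero hx hxy (bound h)⟩

end Sequences

lemma norm_rpow_le_two_rpow_mul {E : Type*} [SeminormedAddCommGroup E] {p : ℝ} (hp : 0 ≤ p)
    (x y : E) : ‖x‖ ^ p ≤ 2 ^ p * (‖x - y‖ ^ p + ‖y‖ ^ p) := calc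
  ‖x‖ ^ p ≤ (2 * max ‖x - y‖ ‖y‖) ^ p := by
    gcongr
    linarith [norm_le_norm_sub_add x y, le_max_left ‖x - y‖ ‖y‖, le_max_right ‖x - y‖ ‖y‖]
  _ = 2 ^ p * max (‖x - y‖ ^ p) (‖y‖ ^ p) := by
    rw [Real.mul_rpow zero_le_two (by positivity), Real.rpow_max (by positivity) (by positivity) hp]
  _ ≤ 2 ^ p * (‖x - y‖ ^ p + ‖y‖ ^ p) := by
    gcongr; exact max_le_add_of_nonneg (by positivity) (by positivity)

section IntervalIntegrals

variable {E : Type*} [NormedAddCommGroup E] {ι : Type*} {l : Filter ι} {a b p : ℝ}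

lemma integral_norm_rpow_le (hab : a ≤ b) (hp : 0 ≤ p) {f g : ℝ → E} (hf : Continuous f)
    (hg : Continuous g) :
    ∫ s in a..b, ‖f s‖ ^ p ≤
      2 ^ p * ((∫ s in a..b, ‖f s - g s‖ ^ p) + ∫ s in a..b, ‖g s‖ ^ p) := by
  have hint : ∀ {h : ℝ → E}, Continuous h → IntervalIntegrable (fun s => ‖h s‖ ^ p) volume a b :=
    fun hh => (hh.norm.rpow_const fun _ => Or.inr hp).intervalIntegrable a b
  have hfg := hint (h := fun s => f s - g s) (hf.sub hg)
  rw [← intervalIntegral.integral_add hfg (hint hg), ← intervalIntegral.integral_const_mul]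
  exact intervalIntegral.integral_mono_on hab (hint hf) ((hfg.add (hint hg)).const_mul _)
    fun s _ => norm_rpow_le_two_rpow_mul hp _ _

lemma tendsto_integral_norm_rpow_iff_of_sub (hab : a ≤ b) (hp : 0 ≤ p) {u w : ι → ℝ → E}
    (hu : ∀ i, Continuous (u i)) (hw : ∀ i, Continuous (w i))
    (huw : Tendsto (fun i => ∫ s in a..b, ‖u i s - w i s‖ ^ p) l (𝓝 0)) :
    Tendsto (fun i => ∫ s in a..b, ‖u i s‖ ^ p) l (𝓝 0) ↔
      Tendsto (fun i => ∫ s in a..b, ‖w i s‖ ^ p) l (𝓝 0) := by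
  have nonneg : ∀ h : ℝ → E, 0 ≤ ∫ s in a..b, ‖h s‖ ^ p :=
    fun h => intervalIntegral.integral_nonneg hab fun s _ => by positivity
  refine tendsto_nhds_zero_iff_of_le_mul_add (fun i => nonneg _) (fun i => nonneg _)
    (fun i => integral_norm_rpow_le hab hp (hu i) (hw i)) (fun i => ?_) huw
  simpa only [norm_sub_rev] using integral_norm_rpow_le hab hp (hw i) (hu i)

lemma tendsto_integral_norm_sub_rpow {X : Type*} [TopologicalSpace X] (hp : 0 < p) {f : ℝ → E}
    (hf : Continuous f) {φ : X → ℝ → ℝ} (hφ : Continuous φ.uncurry) {τ : ι → X} {x₀ : X}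
    (hτ : Tendsto τ l (𝓝 x₀)) :
    Tendsto (fun i => ∫ s in a..b, ‖f (φ (τ i) s) - f (φ x₀ s)‖ ^ p) l (𝓝 0) := by
  have hφ₀ : Continuous fun q : X × ℝ => φ x₀ q.2 :=
    hφ.comp (continuous_const.prodMk continuous_snd)
  have hcont : Continuous fun x => ∫ s in a..b, ‖f (φ x s) - f (φ x₀ s)‖ ^ p :=
    intervalIntegral.continuous_parametric_intervalIntegral_of_continuous'
      (((hf.comp hφ).sub (hf.comp hφ₀)).norm.rpow_const fun _ => Or.inr hp.le) a b
  simpa [Function.comp_def, Real.zero_rpow hp.ne'] using (hcont.tendsto x₀).comp hτ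

lemma integral_comp_min_eq_add {F : ℝ → ℝ} (hF : Continuous F) {τ : ℝ} (haτ : a ≤ τ)
    (hτb : τ ≤ b) : ∫ s in a..b, F (min τ s) = (∫ s in a..τ, F s) + (b - τ) * F τ := by
  have hint : ∀ c d, IntervalIntegrable (fun s => F (min τ s)) volume c d :=
    fun c d => (hF.comp (continuous_const.min continuous_id)).intervalIntegrable c d
  rw [← intervalIntegral.integral_add_adjacent_intervals (hint a τ) (hint τ b)]
  congr 1
  · refine intervalIntegral.integral_congr fun s hs => ?_
    rw [uIcc_of_le haτ] at hs
    simp only [min_eq_right hs.2]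
  · rw [intervalIntegral.integral_congr (g := fun _ => F τ) fun s hs => ?_,
      intervalIntegral.integral_const, smul_eq_mul]
    rw [uIcc_of_le hτb] at hs
    simp only [min_eq_left hs.1]

lemma integral_comp_sub_left_eq_of_nonpos_eq_zero {F : ℝ → ℝ} (hF : Continuous F)
    (hF₀ : ∀ s ≤ 0, F s = 0) {τ : ℝ} (hτb : τ ≤ b) :
    ∫ s in (0:ℝ)..b, F (τ - s) = ∫ s in (0:ℝ)..τ, F s := by
  rw [intervalIntegral.integral_comp_sub_left, sub_zero,
    ← intervalIntegral.integral_add_adjacent_intervals (b := 0) (hF.intervalIntegrable _ _)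
      (hF.intervalIntegrable _ _), intervalIntegral.integral_congr (g := fun _ => 0) fun s hs => ?_,
    intervalIntegral.integral_zero, zero_add]
  rw [uIcc_of_le (by linarith)] at hs
  exact hF₀ s hs.2

end IntervalIntegrals

section TimeChange

variable {E : Type*} [NormedAddCommGroup E] {ι : Type*} {l : Filter ι} {p T t : ℝ}
  {f : ι → ℝ → E} {g : ℝ → E} {τ : ι → ℝ}

lemma tendsto_integral_comp_min_iff (hp : 0 < p) (hT : 0 ≤ T) (hf : ∀ i, Continuous (f i))
    (hg : Continuous g) (hτ : ∀ i, τ i ∈ Icc 0 T) (hτt : Tendsto τ l (𝓝 t))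
    (hend : Tendsto (fun i => ‖f i (τ i) - g t‖) l (𝓝 0)) :
    Tendsto (fun i => ∫ s in (0:ℝ)..T, ‖f i (min (τ i) s) - g (min t s)‖ ^ p) l (𝓝 0) ↔
      Tendsto (fun i => ∫ s in (0:ℝ)..τ i, ‖f i s - g s‖ ^ p) l (𝓝 0) := by
  have hmin : ∀ x : ℝ, Continuous fun s : ℝ => min x s := fun x => by fun_prop
  rw [tendsto_integral_norm_rpow_iff_of_sub hT hp.le
    (u := fun i s => f i (min (τ i) s) - g (min t s))
    (w := fun i s => f i (min (τ i) s) - g (min (τ i) s))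
    (fun i => ((hf i).comp (hmin _)).sub (hg.comp (hmin _)))
    (fun i => ((hf i).comp (hmin _)).sub (hg.comp (hmin _)))]
  · have split : ∀ i, ∫ s in (0:ℝ)..T, ‖f i (min (τ i) s) - g (min (τ i) s)‖ ^ p =
        (∫ s in (0:ℝ)..τ i, ‖f i s - g s‖ ^ p) + (T - τ i) * ‖f i (τ i) - g (τ i)‖ ^ p :=
      fun i => integral_comp_min_eq_add (F := fun s => ‖f i s - g s‖ ^ p)
        (((hf i).sub hg).norm.rpow_const fun _ => Or.inr hp.le) (hτ i).1 (hτ i).2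
    have hgap : Tendsto (fun i => ‖f i (τ i) - g (τ i)‖) l (𝓝 0) := by
      refine squeeze_zero (fun i => norm_nonneg _) (fun i => norm_sub_le_norm_sub_add_norm_sub
        (f i (τ i)) (g t) (g (τ i))) ?_
      simpa using hend.add (((hg.tendsto t).comp hτt).const_sub (g t)).norm
    have hrest : Tendsto (fun i => (T - τ i) * ‖f i (τ i) - g (τ i)‖ ^ p) l (𝓝 0) := by
      simpa using (hτt.const_sub T).mul
        ((tendsto_rpow_nhds_zero_iff (fun _ => norm_nonneg _) hp).2 hgap)
    simp_rw [split]
    rw [tendsto_add_nhds_zero_iff_of_nonneg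
      (fun i => intervalIntegral.integral_nonneg (hτ i).1 fun s _ => by positivity)
      (fun i => mul_nonneg (sub_nonneg.2 (hτ i).2) (by positivity))]
    exact and_iff_left hrest
  · simp only [sub_sub_sub_cancel_left]
    exact tendsto_integral_norm_sub_rpow hp hg (φ := fun x s => min x s) (by fun_prop) hτt

lemma tendsto_integral_comp_sub_iff (hp : 0 < p) (hT : 0 ≤ T) (hf : ∀ i, Continuous (f i))
    (hg : Continuous g) (hf₀ : ∀ i, ∀ s ≤ 0, f i s = 0) (hg₀ : ∀ s ≤ 0, g s = 0)
    (hτ : ∀ i, τ i ≤ T) (hτt : Tendsto τ l (𝓝 t)) :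
    Tendsto (fun i => ∫ s in (0:ℝ)..T, ‖f i (τ i - s) - g (t - s)‖ ^ p) l (𝓝 0) ↔
      Tendsto (fun i => ∫ s in (0:ℝ)..τ i, ‖f i s - g s‖ ^ p) l (𝓝 0) := by
  have hsub : ∀ x : ℝ, Continuous fun s : ℝ => x - s := fun x => by fun_prop
  rw [tendsto_integral_norm_rpow_iff_of_sub hT hp.le
    (u := fun i s => f i (τ i - s) - g (t - s))
    (w := fun i s => f i (τ i - s) - g (τ i - s))
    (fun i => ((hf i).comp (hsub _)).sub (hg.comp (hsub _)))
    (fun i => ((hf i).comp (hsub _)).sub (hg.comp (hsub _)))]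
  · have shift : ∀ i, ∫ s in (0:ℝ)..T, ‖f i (τ i - s) - g (τ i - s)‖ ^ p =
        ∫ s in (0:ℝ)..τ i, ‖f i s - g s‖ ^ p :=
      fun i => integral_comp_sub_left_eq_of_nonpos_eq_zero (F := fun s => ‖f i s - g s‖ ^ p)
        (((hf i).sub hg).norm.rpow_const fun _ => Or.inr hp.le)
        (fun s hs => by simp [hf₀ i s hs, hg₀ s hs, Real.zero_rpow hp.ne']) (hτ i)
    simp_rw [shift]
  · simp only [sub_sub_sub_cancel_left]
    exact tendsto_integral_norm_sub_rpow hp hg (φ := fun x s => x - s) (by fun_prop) hτt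

end TimeChange

namespace PathSp

variable {m : ℕ} {T : ℝ}

def extend (hT : 0 ≤ T) (ω : PathSp m T) : C(ℝ, Em m) := ContinuousMap.IccExtend hT ω.val

lemma extend_of_nonpos (hT : 0 ≤ T) (ω : PathSp m T) {r : ℝ} (hr : r ≤ 0) :
    ω.extend hT r = 0 := by
  rw [extend, ContinuousMap.coe_IccExtend, Set.IccExtend_of_le_left _ _ hr]
  exact ω.2 _ rfl

lemma ev_eq_extend (hT : 0 ≤ T) (ω : PathSp m T) {r : ℝ} (hr : r ≤ T) :
    ev ω r = ω.extend hT r := by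
  unfold ev
  split_ifs with h
  · rw [extend, ContinuousMap.coe_IccExtend, Set.IccExtend_of_mem _ _ h]
  · rw [extend_of_nonpos hT ω (le_of_lt (not_le.1 fun h0 => h ⟨h0, hr⟩))]

end PathSp

section Pseudometrics

variable {m : ℕ} {T p : ℝ} (hT : 0 ≤ T)

lemma dPmetric_eq (hp : 0 ≤ p) (θ' θ : ThetaSp m T) :
    dPmetric p θ' θ = |(θ'.1 : ℝ) - θ.1| +
      ((∫ s in (0:ℝ)..T, ‖θ'.2.extend hT (min θ'.1 s) - θ.2.extend hT (min θ.1 s)‖ ^ p) +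
        ‖θ'.2.extend hT θ'.1 - θ.2.extend hT θ.1‖ ^ p) ^ (1 / p) := by
  set K : ℝ → ℝ := fun r => ‖θ'.2.extend hT (min θ'.1 r) - θ.2.extend hT (min θ.1 r)‖ ^ p
  have hK : Continuous K := by fun_prop (disch := exact hp)
  have hmin : ∀ (θ : ThetaSp m T) (s : ℝ), min (θ.1 : ℝ) (min T s) = min (θ.1 : ℝ) s :=
    fun θ s => by rw [← min_assoc, min_eq_left θ.1.2.2]
  have hev : ∀ (θ : ThetaSp m T) (s : ℝ),
      ev θ.2 (min (θ.1 : ℝ) s) = θ.2.extend hT (min (θ.1 : ℝ) s) :=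
    fun θ s => PathSp.ev_eq_extend hT _ (min_le_of_left_le θ.1.2.2)
  unfold dPmetric
  congr 2
  -- as `θ.1 ≤ T`, the integrand only depends on `min T s`, which is constant on `[T, T + 1]`
  calc ∫ s in (0:ℝ)..T + 1, ‖ev θ'.2 (min θ'.1 s) - ev θ.2 (min θ.1 s)‖ ^ p
      = ∫ s in (0:ℝ)..T + 1, K (min T s) := by simp only [K, hev, hmin]
    _ = (∫ s in (0:ℝ)..T, K s) + (T + 1 - T) * K T :=
      integral_comp_min_eq_add hK hT (by linarith)
    _ = _ := by simp [K, min_eq_left θ'.1.2.2, min_eq_left θ.1.2.2]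

lemma dLp_eq (θ' θ : ThetaSp m T) :
    dLp p θ' θ = |(θ'.1 : ℝ) - θ.1| + ‖θ'.2.extend hT θ'.1 - θ.2.extend hT θ.1‖ +
      (∫ s in (0:ℝ)..T, ‖θ'.2.extend hT (θ'.1 - s) - θ.2.extend hT (θ.1 - s)‖ ^ p) ^ (1 / p) := by
  have hle : ∀ (θ : ThetaSp m T) {s : ℝ}, 0 ≤ s → (θ.1 : ℝ) - s ≤ T :=
    fun θ s hs => by linarith [θ.1.2.2]
  unfold dLp
  rw [PathSp.ev_eq_extend hT _ θ'.1.2.2, PathSp.ev_eq_extend hT _ θ.1.2.2]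
  congr 2
  refine intervalIntegral.integral_congr fun s hs => ?_
  rw [uIcc_of_le hT] at hs
  simp only [PathSp.ev_eq_extend hT _ (hle θ' hs.1), PathSp.ev_eq_extend hT _ (hle θ hs.1)]

variable {ι : Type*} {l : Filter ι} (θn : ι → ThetaSp m T) (θ : ThetaSp m T)

lemma tendsto_abs_sub_time_iff :
    Tendsto (fun i => |((θn i).1 : ℝ) - θ.1|) l (𝓝 0) ↔
      Tendsto (fun i => ((θn i).1 : ℝ)) l (𝓝 θ.1) := by
  simp only [tendsto_iff_norm_sub_tendsto_zero (f := fun i => ((θn i).1 : ℝ)), Real.norm_eq_abs]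

lemma tendsto_dPmetric_iff (hp : 0 < p) :
    Tendsto (fun i => dPmetric p (θn i) θ) l (𝓝 0) ↔
      Tendsto (fun i => ((θn i).1 : ℝ)) l (𝓝 θ.1) ∧
      Tendsto (fun i => ‖(θn i).2.extend hT (θn i).1 - θ.2.extend hT θ.1‖) l (𝓝 0) ∧
      Tendsto (fun i => ∫ s in (0:ℝ)..T,
        ‖(θn i).2.extend hT (min (θn i).1 s) - θ.2.extend hT (min θ.1 s)‖ ^ p) l (𝓝 0) := by
  have hint : ∀ i, 0 ≤ ∫ s in (0:ℝ)..T,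
      ‖(θn i).2.extend hT (min (θn i).1 s) - θ.2.extend hT (min θ.1 s)‖ ^ p :=
    fun i => intervalIntegral.integral_nonneg hT fun s _ => by positivity
  simp_rw [dPmetric_eq hT hp.le]
  rw [tendsto_add_nhds_zero_iff_of_nonneg (fun _ => abs_nonneg _)
      (fun i => Real.rpow_nonneg (add_nonneg (hint i) (by positivity)) _),
    tendsto_rpow_nhds_zero_iff (fun i => add_nonneg (hint i) (by positivity)) (one_div_pos.2 hp),
    tendsto_add_nhds_zero_iff_of_nonneg hint (fun _ => by positivity),
    tendsto_rpow_nhds_zero_iff (fun _ => norm_nonneg _) hp, tendsto_abs_sub_time_iff]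
  tauto

lemma tendsto_dLp_iff (hp : 0 < p) :
    Tendsto (fun i => dLp p (θn i) θ) l (𝓝 0) ↔
      Tendsto (fun i => ((θn i).1 : ℝ)) l (𝓝 θ.1) ∧
      Tendsto (fun i => ‖(θn i).2.extend hT (θn i).1 - θ.2.extend hT θ.1‖) l (𝓝 0) ∧
      Tendsto (fun i => ∫ s in (0:ℝ)..T,
        ‖(θn i).2.extend hT ((θn i).1 - s) - θ.2.extend hT (θ.1 - s)‖ ^ p) l (𝓝 0) := by
  have hint : ∀ i, 0 ≤ ∫ s in (0:ℝ)..T,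
      ‖(θn i).2.extend hT ((θn i).1 - s) - θ.2.extend hT (θ.1 - s)‖ ^ p :=
    fun i => intervalIntegral.integral_nonneg hT fun s _ => by positivity
  simp_rw [dLp_eq hT]
  rw [tendsto_add_nhds_zero_iff_of_nonneg (fun _ => by positivity)
      (fun i => Real.rpow_nonneg (hint i) _),
    tendsto_add_nhds_zero_iff_of_nonneg (fun _ => abs_nonneg _) (fun _ => norm_nonneg _),
    tendsto_rpow_nhds_zero_iff hint (one_div_pos.2 hp), tendsto_abs_sub_time_iff, and_assoc]

end Pseudometrics

theorem stmt3_general (m : ℕ) (T : ℝ) (p : ℝ) (hp : 1 ≤ p) :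
    ∀ (θn : ℕ → ThetaSp m T) (θ : ThetaSp m T),
      Tendsto (fun n => dPmetric p (θn n) θ) atTop (nhds 0) ↔
      Tendsto (fun n => dLp p (θn n) θ) atTop (nhds 0) := by
  intro θn θ
  have hT : 0 ≤ T := θ.1.2.1.trans θ.1.2.2
  have hp₀ : 0 < p := by linarith
  rw [tendsto_dPmetric_iff hT θn θ hp₀, tendsto_dLp_iff hT θn θ hp₀]
  refine and_congr_right fun hτ => and_congr_right fun hend => ?_
  rw [tendsto_integral_comp_min_iff hp₀ hT (fun n => ((θn n).2.extend hT).continuous)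
      (θ.2.extend hT).continuous (fun n => (θn n).1.2) hτ hend,
    tendsto_integral_comp_sub_iff hp₀ hT (fun n => ((θn n).2.extend hT).continuous)
      (θ.2.extend hT).continuous (fun n _ => (θn n).2.extend_of_nonpos hT)
      (fun _ => θ.2.extend_of_nonpos hT) (fun n => (θn n).1.2.2) hτ]

/-- for `1 ≤ p < ∞`, `d_p((t_n,ω_n),(t,ω)) → 0` iff `←d_p((t_n,ω_n),(t,ω)) → 0`;
i.e., the pseudometrics `d_p` and `←d_p` induce the same topology on `Θ`. -/
theorem stmt3 (m : ℕ) (hm : 1 ≤ m) (T : ℝ) (hT : 0 < T) (p : ℝ) (hp : 1 ≤ p) :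
    ∀ (θn : ℕ → ThetaSp m T) (θ : ThetaSp m T),
      Tendsto (fun n => dPmetric p (θn n) θ) atTop (nhds 0) ↔
      Tendsto (fun n => dLp p (θn n) θ) atTop (nhds 0) :=
  stmt3_general m T p hp
end
end

section
/- Fix 1 ≤ p < ∞. Let u : Θ → ℝ be bounded and upper semicontinuous with respect to ←d_p, and suppose there is a constant C_0 ≥ 0 such that lim_{δ→0} sup{ |u(θ') − u(T,ω)| / ←d_p(θ',(T,ω)) : θ' ∈ Θ, ω ∈ Ω, ←d_p(θ',(T,ω)) ≤ δ } ≤ C_0 (with the convention 0/0 = 0). For n > 0 define u^n(θ) := sup_{θ'∈Θ} ( u(θ') − n·←d_p(θ,θ') ). Then there exists N > 0 such that for all n ≥ N and all ω ∈ Ω, u^n(T,ω) = u(T,ω); in fact this holds whenever n ≥ max(C_0+1, 2·sup|u|/δ) for any δ > 0 for which the supremum above (over ←d_p(θ',(T,ω)) ≤ δ) is at most C_0+1. -/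
noncomputable section

open MeasureTheory Filter

/-- The sup-convolution `u^n(θ) = sup_{θ'} ( u(θ') − n ←d_p(θ,θ') )`. -/
def supConv {m : ℕ} {T : ℝ} (p : ℝ) (u : ThetaSp m T → ℝ) (n : ℝ) (θ : ThetaSp m T) : ℝ :=
  ⨆ θ' : ThetaSp m T, (u θ' - n * dLp p θ θ')

/-- The terminal time `T` as an element of `[0,T]`. -/
def endPt (T : ℝ) (hT : 0 < T) : Set.Icc (0:ℝ) T := ⟨T, le_of_lt hT, le_refl T⟩

/-
Near `θ₀` the penalty `n ←d_p(θ₀, θ')` beats the increment `u θ' - u θ₀` because `n` exceeds the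
local Lipschitz constant; far from `θ₀` it beats it because `n δ ≥ 2 sup |u|` exceeds the
oscillation of `u`. So `θ' = θ₀` attains the supremum defining `u^n(θ₀)`.
-/

theorem ciSup_sub_mul_eq_of_le_mul_near {X : Type*} {u d : X → ℝ} {x₀ : X} {M L δ n : ℝ}
    (hd₀ : d x₀ = 0) (hd : ∀ y, 0 ≤ d y) (hM : ∀ y, |u y| ≤ M) (hδ : 0 < δ)
    (hlip : ∀ y, d y ≤ δ → u y - u x₀ ≤ L * d y) (hL : L ≤ n) (hδn : 2 * M ≤ n * δ) :
    ⨆ y, (u y - n * d y) = u x₀ := by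
  have : Nonempty X := ⟨x₀⟩
  have hle : ∀ y, u y - n * d y ≤ u x₀ := by
    intro y
    rcases le_or_gt (d y) δ with hnear | hfar
    · have := mul_le_mul_of_nonneg_right hL (hd y)
      linarith [hlip y hnear]
    · have hn : 0 ≤ n := by nlinarith [abs_nonneg (u x₀), hM x₀]
      have hosc : u y - u x₀ ≤ 2 * M := by
        linarith [le_abs_self (u y), neg_abs_le (u x₀), hM y, hM x₀]
      have := mul_le_mul_of_nonneg_left hfar.le hn
      linarith
  refine le_antisymm (ciSup_le hle) (le_ciSup_of_le ⟨u x₀, ?_⟩ x₀ (by simp [hd₀]))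
  rintro _ ⟨y, rfl⟩
  exact hle y

section dLp

variable {m : ℕ} {T p : ℝ}

theorem dLp_nonneg (θ θ' : ThetaSp m T) : 0 ≤ dLp p θ θ' := by
  have hT : 0 ≤ T := θ.1.2.1.trans θ.1.2.2
  have hint := intervalIntegral.integral_nonneg (μ := volume) hT fun s _ =>
    Real.rpow_nonneg (norm_nonneg (ev θ.2 ((θ.1 : ℝ) - s) - ev θ'.2 ((θ'.1 : ℝ) - s))) p
  unfold dLp
  have := Real.rpow_nonneg hint (1 / p)
  positivity

theorem dLp_self (hp : p ≠ 0) (θ : ThetaSp m T) : dLp p θ θ = 0 := by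
  simp [dLp, Real.zero_rpow hp, hp]

theorem dLp_comm (θ θ' : ThetaSp m T) : dLp p θ θ' = dLp p θ' θ := by
  unfold dLp
  rw [abs_sub_comm, norm_sub_rev]
  congr 2
  exact intervalIntegral.integral_congr fun s _ => by simp only [norm_sub_rev]

theorem supConv_eq_of_le_mul_near {u : ThetaSp m T → ℝ} {θ₀ : ThetaSp m T} {L δ n : ℝ}
    (hp : p ≠ 0) (hbd : BddAbove (Set.range fun θ => |u θ|)) (hδ : 0 < δ)
    (hlip : ∀ θ', dLp p θ' θ₀ ≤ δ → |u θ' - u θ₀| ≤ L * dLp p θ' θ₀) (hL : L ≤ n)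
    (hn : 2 * (⨆ θ, |u θ|) / δ ≤ n) :
    supConv p u n θ₀ = u θ₀ := by
  simp only [supConv, dLp_comm θ₀]
  exact ciSup_sub_mul_eq_of_le_mul_near (dLp_self hp θ₀) (dLp_nonneg · θ₀) (le_ciSup hbd) hδ
    (fun θ' h => (le_abs_self _).trans (hlip θ' h)) hL ((div_le_iff₀ hδ).mp hn)

end dLp

theorem stmt6_general (m : ℕ) (T : ℝ) (hT : 0 < T) (p : ℝ) (hp : 1 ≤ p)
    (u : ThetaSp m T → ℝ)
    (hbd : BddAbove (Set.range fun θ => |u θ|))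
    (C0 : ℝ) (hC0 : 0 ≤ C0)
    (hterm : ∀ ε > (0:ℝ), ∃ δ > (0:ℝ), ∀ (θ' : ThetaSp m T) (ω : PathSp m T),
      dLp p θ' (endPt T hT, ω) ≤ δ →
      |u θ' - u (endPt T hT, ω)| ≤ (C0 + ε) * dLp p θ' (endPt T hT, ω)) :
    (∃ N : ℝ, 0 < N ∧ ∀ n : ℝ, N ≤ n → ∀ ω : PathSp m T,
      supConv p u n (endPt T hT, ω) = u (endPt T hT, ω)) ∧
    (∀ δ > (0:ℝ),
      (∀ (θ' : ThetaSp m T) (ω : PathSp m T),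
        dLp p θ' (endPt T hT, ω) ≤ δ →
        |u θ' - u (endPt T hT, ω)| ≤ (C0 + 1) * dLp p θ' (endPt T hT, ω)) →
      ∀ n : ℝ, max (C0 + 1) (2 * (⨆ θ : ThetaSp m T, |u θ|) / δ) ≤ n →
        ∀ ω : PathSp m T, supConv p u n (endPt T hT, ω) = u (endPt T hT, ω)) := by
  have hp₀ : p ≠ 0 := by positivity
  refine ⟨?_, fun δ hδ hlip n hn ω => supConv_eq_of_le_mul_near hp₀ hbd hδ (hlip · ω)
    (le_of_max_le_left hn) (le_of_max_le_right hn)⟩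
  obtain ⟨δ, hδ, hlip⟩ := hterm 1 one_pos
  exact ⟨_, lt_max_of_lt_left (by linarith), fun n hn ω => supConv_eq_of_le_mul_near hp₀ hbd hδ
    (hlip · ω) (le_of_max_le_left hn) (le_of_max_le_right hn)⟩

/-- if `u` is bounded, `←d_p`-upper semicontinuous and satisfies the terminal
Lipschitz-type condition with constant `C_0`
(`lim_{δ→0} sup { |u(θ') − u(T,ω)| / ←d_p(θ',(T,ω)) : ←d_p(θ',(T,ω)) ≤ δ } ≤ C_0`,
encoded below through the equivalent multiplicative bounds), then the sup-convolutions
`u^n` agree with `u` at terminal time for all large `n`; in fact for all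
`n ≥ max (C_0 + 1) (2 sup|u| / δ)` whenever `δ > 0` is such that the sup over distances
`≤ δ` is at most `C_0 + 1`. -/
theorem stmt6 (m : ℕ) (hm : 1 ≤ m) (T : ℝ) (hT : 0 < T) (p : ℝ) (hp : 1 ≤ p)
    (u : ThetaSp m T → ℝ)
    (hbd : BddAbove (Set.range fun θ => |u θ|))
    (husc : ∀ (θn : ℕ → ThetaSp m T) (θ : ThetaSp m T),
      Tendsto (fun n => dLp p (θn n) θ) atTop (nhds 0) →
      limsup (fun n => u (θn n)) atTop ≤ u θ)
    (C0 : ℝ) (hC0 : 0 ≤ C0)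
    (hterm : ∀ ε > (0:ℝ), ∃ δ > (0:ℝ), ∀ (θ' : ThetaSp m T) (ω : PathSp m T),
      dLp p θ' (endPt T hT, ω) ≤ δ →
      |u θ' - u (endPt T hT, ω)| ≤ (C0 + ε) * dLp p θ' (endPt T hT, ω)) :
    (∃ N : ℝ, 0 < N ∧ ∀ n : ℝ, N ≤ n → ∀ ω : PathSp m T,
      supConv p u n (endPt T hT, ω) = u (endPt T hT, ω)) ∧
    (∀ δ > (0:ℝ),
      (∀ (θ' : ThetaSp m T) (ω : PathSp m T),
        dLp p θ' (endPt T hT, ω) ≤ δ →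
        |u θ' - u (endPt T hT, ω)| ≤ (C0 + 1) * dLp p θ' (endPt T hT, ω)) →
      ∀ n : ℝ, max (C0 + 1) (2 * (⨆ θ : ThetaSp m T, |u θ|) / δ) ≤ n →
        ∀ ω : PathSp m T, supConv p u n (endPt T hT, ω) = u (endPt T hT, ω)) :=
  stmt6_general m T hT p hp u hbd C0 hC0 hterm
end
end

section
/- The set of all f ∈ L²((0,T),ℝ^m) that admit a representative of the form f(t) = c + ∫_0^t g(s) ds for a.e. t ∈ (0,T), for some c ∈ ℝ^m and g ∈ L²((0,T),ℝ^m) (that is, the Sobolev space W^{1,2}((0,T),ℝ^m)), is a Borel subset of the Hilbert space L²((0,T),ℝ^m). -/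
noncomputable section

open MeasureTheory Filter

/-- Lebesgue measure restricted to `(0,T)`. -/
abbrev muT (T : ℝ) : Measure ℝ := volume.restrict (Set.Ioo (0:ℝ) T)

/-!
The map `(c, g) ↦ (t ↦ c + ∫₀ᵗ g)` is a linear operator `E × Lᵖ(0,T) → Lᵖ(0,T)`, bounded because
Hölder's inequality controls `∫ ‖g‖` by `‖g‖_p`, and injective: if a primitive vanishes a.e. it
vanishes on `[0, T]` by continuity, which gives `c = 0`, and then `g = 0` a.e. by the Lebesgue
differentiation theorem. The set in question is the range of this operator, and by the
Lusin–Souslin theorem a continuous injective image of the Polish space `E × Lᵖ(0,T)` is Borel.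
-/

open Set
open scoped ENNReal

theorem MeasureTheory.Lp.integral_norm_le {α E : Type*} {mα : MeasurableSpace α}
    {μ : Measure α} [IsFiniteMeasure μ] [NormedAddCommGroup E] {p : ℝ≥0∞} [hp : Fact (1 ≤ p)]
    (f : Lp E p μ) :
    ∫ x, ‖f x‖ ∂μ ≤ measureUnivNNReal μ ^ (1 - p.toReal⁻¹) * ‖f‖ := by
  have hf := Lp.aestronglyMeasurable f
  have hexp : 0 ≤ 1 - p.toReal⁻¹ := by
    rw [sub_nonneg, ← ENNReal.toReal_inv]
    exact ENNReal.toReal_le_of_le_ofReal zero_le_one (by simpa using ENNReal.inv_le_one.2 hp.out)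
  have h := eLpNorm_le_eLpNorm_mul_rpow_measure_univ hp.out hf
  rw [ENNReal.toReal_one, div_one, one_div] at h
  calc ∫ x, ‖f x‖ ∂μ = (eLpNorm f 1 μ).toReal := by
        rw [eLpNorm_one_eq_lintegral_enorm, integral_norm_eq_lintegral_enorm hf]
    _ ≤ (eLpNorm f p μ * μ univ ^ (1 - p.toReal⁻¹)).toReal :=
        ENNReal.toReal_mono (ENNReal.mul_ne_top (Lp.eLpNorm_ne_top f)
          (ENNReal.rpow_ne_top_of_nonneg hexp (measure_ne_top μ univ))) h
    _ = measureUnivNNReal μ ^ (1 - p.toReal⁻¹) * ‖f‖ := by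
        rw [ENNReal.toReal_mul, ← ENNReal.toReal_rpow, mul_comm, Lp.norm_def]
        rfl

theorem MeasureTheory.Lp.integrable {α E : Type*} {mα : MeasurableSpace α} {μ : Measure α}
    [IsFiniteMeasure μ] [NormedAddCommGroup E] {p : ℝ≥0∞} [Fact (1 ≤ p)] (f : Lp E p μ) :
    Integrable f μ :=
  (Lp.memLp f).integrable Fact.out

theorem MeasureTheory.IntegrableOn.intervalIntegrable_of_mem_Icc {E : Type*} [NormedAddCommGroup E]
    {g : ℝ → E} {a b t : ℝ} (hg : IntegrableOn g (Ioo a b)) (ht : t ∈ Icc a b) :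
    IntervalIntegrable g volume a t :=
  (intervalIntegrable_iff_integrableOn_Ioc_of_le ht.1).2 <|
    (integrableOn_Ioc_iff_integrableOn_Ioo (f := g)).mpr hg |>.mono_set (Ioc_subset_Ioc_right ht.2)

section Primitive

variable {E : Type*} [NormedAddCommGroup E] [NormedSpace ℝ E] {T t : ℝ}

theorem ae_eq_zero_of_forall_intervalIntegral_eq_zero [CompleteSpace E] {g : ℝ → E} {a b : ℝ}
    (hg : IntervalIntegrable g volume a b) (h : ∀ t ∈ Ioo a b, ∫ s in a..t, g s = 0) :
    ∀ᵐ x ∂volume.restrict (Ioo a b), g x = 0 := by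
  filter_upwards [ae_restrict_of_ae hg.ae_hasDerivAt_integral, ae_restrict_mem measurableSet_Ioo]
    with x hderiv hx
  have hconst : (fun t => ∫ s in a..t, g s) =ᶠ[nhds x] fun _ => 0 :=
    eventually_of_mem (Ioo_mem_nhds hx.1 hx.2) h
  refine (hderiv (Ioo_subset_Icc_self.trans Icc_subset_uIcc hx) a left_mem_uIcc).unique ?_
  exact (hasDerivAt_const x (0 : E)).congr_of_eventuallyEq hconst

def primitive (c : E) (g : ℝ → E) (t : ℝ) : E := c + ∫ s in (0:ℝ)..t, g s

variable {c : E} {g : ℝ → E}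

theorem primitive_congr_ae {g₁ g₂ : ℝ → E} (h : g₁ =ᵐ[muT T] g₂) (ht : t ∈ Icc 0 T) :
    primitive c g₁ t = primitive c g₂ t := by
  have h' : g₁ =ᵐ[volume.restrict (Ioc 0 t)] g₂ := by
    refine ae_restrict_of_ae_restrict_of_subset (Ioc_subset_Ioc_right ht.2) ?_
    rwa [← Measure.restrict_congr_set Ioo_ae_eq_Ioc]
  rw [primitive, primitive, intervalIntegral.integral_of_le ht.1,
    intervalIntegral.integral_of_le ht.1, integral_congr_ae h']

theorem primitive_add {c₁ c₂ : E} {g₁ g₂ : ℝ → E} (hg₁ : IntervalIntegrable g₁ volume 0 t)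
    (hg₂ : IntervalIntegrable g₂ volume 0 t) :
    primitive (c₁ + c₂) (g₁ + g₂) t = primitive c₁ g₁ t + primitive c₂ g₂ t := by
  rw [primitive, primitive, primitive, Pi.add_def, intervalIntegral.integral_add hg₁ hg₂]
  abel

theorem primitive_smul (r : ℝ) : primitive (r • c) (r • g) t = r • primitive c g t := by
  rw [primitive, primitive, Pi.smul_def, intervalIntegral.integral_smul, smul_add]

theorem continuousOn_primitive (hT : 0 ≤ T) (hg : IntegrableOn g (Ioo 0 T)) :
    ContinuousOn (primitive c g) (Icc 0 T) := by
  have hg' : IntegrableOn g (uIcc 0 T) := by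
    rwa [uIcc_of_le hT, integrableOn_Icc_iff_integrableOn_Ioo]
  rw [← uIcc_of_le hT]
  exact continuousOn_const.add (intervalIntegral.continuousOn_primitive_interval hg')

theorem norm_primitive_le (hg : IntegrableOn g (Ioo 0 T)) (ht : t ∈ Icc 0 T) :
    ‖primitive c g t‖ ≤ ‖c‖ + ∫ s in Ioo 0 T, ‖g s‖ := by
  refine (norm_add_le _ _).trans (add_le_add_right ?_ _)
  calc ‖∫ s in (0:ℝ)..t, g s‖ ≤ ∫ s in (0:ℝ)..t, ‖g s‖ :=
        intervalIntegral.norm_integral_le_integral_norm ht.1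
    _ = ∫ s in Ioc 0 t, ‖g s‖ := intervalIntegral.integral_of_le ht.1
    _ ≤ ∫ s in Ioo 0 T, ‖g s‖ :=
        setIntegral_mono_set hg.norm (Eventually.of_forall fun _ => norm_nonneg _)
          ((Ioc_subset_Ioc_right ht.2).eventuallyLE.trans Ioo_ae_eq_Ioc.symm.le)

theorem memLp_primitive {p : ℝ≥0∞} (hT : 0 ≤ T) (hg : IntegrableOn g (Ioo 0 T)) :
    MemLp (primitive c g) p (muT T) := by
  refine MemLp.of_bound (((continuousOn_primitive hT hg).mono Ioo_subset_Icc_self)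
    |>.aestronglyMeasurable measurableSet_Ioo) (‖c‖ + ∫ s in Ioo 0 T, ‖g s‖) ?_
  filter_upwards [ae_restrict_mem measurableSet_Ioo] with t ht
  exact norm_primitive_le hg (Ioo_subset_Icc_self ht)

end Primitive

section PrimitiveLp

variable {E : Type*} [NormedAddCommGroup E] [NormedSpace ℝ E] {T : ℝ} {p : ℝ≥0∞} [Fact (1 ≤ p)]

variable (E p) in
def primitiveLp (hT : 0 ≤ T) : (E × Lp E p (muT T)) →ₗ[ℝ] Lp E p (muT T) where
  toFun x := (memLp_primitive hT (Lp.integrable x.2)).toLp (primitive x.1 x.2)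
  map_add' x y := by
    rw [← MemLp.toLp_add]
    refine MemLp.toLp_congr _ _ ?_
    filter_upwards [ae_restrict_mem measurableSet_Ioo] with t ht
    have ht' := Ioo_subset_Icc_self ht
    rw [Prod.snd_add, primitive_congr_ae (Lp.coeFn_add _ _) ht', Prod.fst_add,
      primitive_add (IntegrableOn.intervalIntegrable_of_mem_Icc (Lp.integrable x.2) ht')
        (IntegrableOn.intervalIntegrable_of_mem_Icc (Lp.integrable y.2) ht')]
    rfl
  map_smul' r x := by
    rw [RingHom.id_apply, ← MemLp.toLp_const_smul]
    refine MemLp.toLp_congr _ _ ?_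
    filter_upwards [ae_restrict_mem measurableSet_Ioo] with t ht
    rw [Prod.smul_snd, primitive_congr_ae (Lp.coeFn_smul _ _) (Ioo_subset_Icc_self ht),
      Prod.smul_fst, primitive_smul]
    rfl

theorem coeFn_primitiveLp (hT : 0 ≤ T) (x : E × Lp E p (muT T)) :
    primitiveLp E p hT x =ᵐ[muT T] primitive x.1 x.2 :=
  MemLp.coeFn_toLp (memLp_primitive hT (Lp.integrable x.2))

theorem continuous_primitiveLp (hT : 0 ≤ T) : Continuous (primitiveLp E p hT) := by
  set M := measureUnivNNReal (muT T)
  refine AddMonoidHomClass.continuous_of_bound _ (M ^ p.toReal⁻¹ * (1 + M ^ (1 - p.toReal⁻¹)))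
    fun x => ?_
  have hbound : ∀ᵐ t ∂muT T, ‖primitiveLp E p hT x t‖ ≤ ‖x.1‖ + M ^ (1 - p.toReal⁻¹) * ‖x.2‖ := by
    filter_upwards [coeFn_primitiveLp hT x, ae_restrict_mem measurableSet_Ioo] with t hx ht
    rw [hx]
    exact (norm_primitive_le (Lp.integrable x.2) (Ioo_subset_Icc_self ht)).trans
      (add_le_add_right (Lp.integral_norm_le x.2) _)
  refine (Lp.norm_le_of_ae_bound (by positivity) hbound).trans ?_
  rw [mul_assoc]
  gcongr
  calc ‖x.1‖ + M ^ (1 - p.toReal⁻¹) * ‖x.2‖ ≤ ‖x‖ + M ^ (1 - p.toReal⁻¹) * ‖x‖ := by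
        gcongr
        exacts [norm_fst_le x, norm_snd_le x]
    _ = (1 + M ^ (1 - p.toReal⁻¹)) * ‖x‖ := by ring

theorem injective_primitiveLp [CompleteSpace E] (hT : 0 < T) :
    Function.Injective (primitiveLp E p hT.le) := by
  refine (injective_iff_map_eq_zero _).2 fun ⟨c, g⟩ hx => ?_
  have hae : primitive c g =ᵐ[muT T] 0 :=
    (coeFn_primitiveLp hT.le (c, g)).symm.trans (Lp.eq_zero_iff_ae_eq_zero.1 hx)
  have hIcc : EqOn (primitive c g) 0 (Icc 0 T) :=
    (Measure.eqOn_Ioo_of_ae_eq volume hae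
      ((continuousOn_primitive hT.le (Lp.integrable g)).mono Ioo_subset_Icc_self)
      continuousOn_const).of_subset_closure (continuousOn_primitive hT.le (Lp.integrable g))
      continuousOn_const Ioo_subset_Icc_self (closure_Ioo hT.ne).ge
  have hc : c = 0 := by simpa [primitive] using hIcc (left_mem_Icc.2 hT.le)
  subst hc
  have hg : g = 0 := by
    refine Lp.eq_zero_iff_ae_eq_zero.2 <| ae_eq_zero_of_forall_intervalIntegral_eq_zero
      (IntegrableOn.intervalIntegrable_of_mem_Icc (Lp.integrable g) (right_mem_Icc.2 hT.le))
      fun t ht => by simpa [primitive] using hIcc (Ioo_subset_Icc_self ht)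
  rw [hg, Prod.mk_zero_zero]

theorem setOf_ae_eq_primitive_eq_range (hT : 0 ≤ T) :
    {f : Lp E p (muT T) | ∃ (c : E) (g : Lp E p (muT T)), ∀ᵐ t ∂muT T, f t = primitive c g t} =
      range (primitiveLp E p hT) := by
  ext f
  constructor
  · rintro ⟨c, g, hf⟩
    exact ⟨(c, g), Lp.ext ((coeFn_primitiveLp hT (c, g)).trans (EventuallyEq.symm hf))⟩
  · rintro ⟨⟨c, g⟩, rfl⟩
    exact ⟨c, g, coeFn_primitiveLp hT (c, g)⟩

theorem measurableSet_setOf_ae_eq_primitive [CompleteSpace E] [SecondCountableTopology E]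
    [Fact (p ≠ ∞)] (hT : 0 < T) :
    MeasurableSet[borel (Lp E p (muT T))]
      {f : Lp E p (muT T) | ∃ (c : E) (g : Lp E p (muT T)), ∀ᵐ t ∂muT T, f t = primitive c g t} := by
  borelize (↥(Lp E p (muT T)))
  rw [setOf_ae_eq_primitive_eq_range hT.le]
  exact measurableSet_range_of_continuous_injective (continuous_primitiveLp hT.le)
    (injective_primitiveLp hT)

end PrimitiveLp

theorem stmt8_general (m : ℕ) (T : ℝ) (hT : 0 < T) :
    MeasurableSet[borel (Lp (Em m) 2 (muT T))]
      {f : Lp (Em m) 2 (muT T) |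
        ∃ (c : Em m) (g : Lp (Em m) 2 (muT T)),
          ∀ᵐ t ∂(muT T), f t = c + ∫ s in (0:ℝ)..t, g s} :=
  have : Fact ((2 : ℝ≥0∞) ≠ ∞) := ⟨ENNReal.ofNat_ne_top⟩
  measurableSet_setOf_ae_eq_primitive hT

/-- the Sobolev space `W^{1,2}((0,T),ℝ^m)`, i.e. the set of `f ∈ L²((0,T),ℝ^m)`
admitting a representative `f(t) = c + ∫_0^t g(s) ds` with `c ∈ ℝ^m` and
`g ∈ L²((0,T),ℝ^m)`, is a Borel subset of `L²((0,T),ℝ^m)`. -/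
theorem stmt8 (m : ℕ) (hm : 1 ≤ m) (T : ℝ) (hT : 0 < T) :
    MeasurableSet[borel (Lp (Em m) 2 (muT T))]
      {f : Lp (Em m) 2 (muT T) |
        ∃ (c : Em m) (g : Lp (Em m) 2 (muT T)),
          ∀ᵐ t ∂(muT T), f t = c + ∫ s in (0:ℝ)..t, g s} :=
  stmt8_general m T hT
end
end

section
/- Let (t_n,ω_n) be a sequence in Θ and (t,ω) ∈ Θ. Define x^n := (ω_n(t_n), s ↦ ω_n(s+t_n)·1_{[−t_n,0]}(s)) ∈ H and x := (ω(t), s ↦ ω(s+t)·1_{[−t,0]}(s)) ∈ H. Then [ t_n → t and |x^n − x|_B → 0 ] if and only if d_B((t_n,ω_n),(t,ω)) → 0. -/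
noncomputable section

open MeasureTheory Filter

/-- The pseudometric `d_B` on `Θ`:
`d_B((t,ω),(t',ω')) = |t−t'| + |ω(t)−ω'(t')| + |∫_0^t ω − ∫_0^{t'} ω'|
  + (∫_0^T |∫_{(t−ρ)∨0}^t ω − ∫_{(t'−ρ)∨0}^{t'} ω'|² dρ)^{1/2}`. -/
def dBmetric {m : ℕ} {T : ℝ} (θ θ' : ThetaSp m T) : ℝ :=
  |(θ.1 : ℝ) - (θ'.1 : ℝ)| + ‖ev θ.2 (θ.1 : ℝ) - ev θ'.2 (θ'.1 : ℝ)‖ +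
    ‖(∫ r in (0:ℝ)..(θ.1 : ℝ), ev θ.2 r) - ∫ r in (0:ℝ)..(θ'.1 : ℝ), ev θ'.2 r‖ +
    Real.sqrt (∫ ρ in (0:ℝ)..T,
      ‖(∫ r in (max ((θ.1 : ℝ) - ρ) 0)..(θ.1 : ℝ), ev θ.2 r) -
        ∫ r in (max ((θ'.1 : ℝ) - ρ) 0)..(θ'.1 : ℝ), ev θ'.2 r‖ ^ 2)

/-- The `B`-norm on `H = ℝ^m × L²((−∞,0),ℝ^m)` (second component given as a plain function):
`|x|_B = ( |x_0|² + ∫_{−∞}^0 | e^s x_0 + ∫_s^0 e^{s−r} x_1(r) dr |² ds )^{1/2}`. -/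
def bNorm {m : ℕ} (x0 : Em m) (x1 : ℝ → Em m) : ℝ :=
  Real.sqrt (‖x0‖ ^ 2 + ∫ s in Set.Iio (0:ℝ),
    ‖Real.exp s • x0 + ∫ r in s..(0:ℝ), Real.exp (s - r) • x1 r‖ ^ 2)

/-- The second component of the `H`-lift of `(t,ω) ∈ Θ`: `s ↦ ω(s+t)·1_{[−t,0]}(s)`. -/
def liftSnd {m : ℕ} {T : ℝ} (t : Set.Icc (0:ℝ) T) (ω : PathSp m T) : ℝ → Em m :=
  fun s => if -(t : ℝ) ≤ s ∧ s ≤ 0 then ev ω (s + (t : ℝ)) else 0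

/-!
Write `h` for the difference of the second components of `xⁿ` and `x`, `H s = ∫_s^0 h`
(`revPrimitive`) and `J s = ∫_s^0 e^{s-r} h r dr` (`expRevPrimitive`). After the substitution
`r ↦ r - t`, `d_B` is `|tₙ - t| + |x₀| + |H(-T)| + ‖H‖_{L²(-T,0)}`, while
`|xⁿ - x|_B² = |x₀|² + ‖e^s x₀ + J‖²_{L²(-∞,0)}`. From `H' = -h` and `J' = J - h` one
gets `H - J = ∫_s^0 J` and `H - J = ∫_s^0 e^{s-r} H(r) dr`; with Cauchy–Schwarz on `[-T, 0]`
and the decay `J s = e^{s+T} J(-T)` for `s ≤ -T` (as `h` vanishes there), this makes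
`|x₀| + |H(-T)| + ‖H‖_{L²(-T,0)}` and `|xⁿ - x|_B` comparable with constants depending only
on `T`.
-/

open Set Real Topology

lemma sq_intervalIntegral_le {g : ℝ → ℝ} {a b : ℝ} (hab : a ≤ b)
    (hg : IntervalIntegrable g volume a b)
    (hg2 : IntervalIntegrable (fun x => g x ^ 2) volume a b) :
    (∫ x in a..b, g x) ^ 2 ≤ (b - a) * ∫ x in a..b, g x ^ 2 := by
  have hquad : ∀ c : ℝ,
      0 ≤ (b - a) * (c * c) + (-2 * ∫ x in a..b, g x) * c + ∫ x in a..b, g x ^ 2 := by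
    intro c
    have hexpand : ∫ x in a..b, (g x - c) ^ 2
        = (b - a) * (c * c) + (-2 * ∫ x in a..b, g x) * c + ∫ x in a..b, g x ^ 2 := by
      simp_rw [show ∀ x, (g x - c) ^ 2 = (g x ^ 2 - 2 * c * g x) + c * c from
        fun x => by ring]
      rw [intervalIntegral.integral_add (hg2.sub (hg.const_mul _)) intervalIntegrable_const,
        intervalIntegral.integral_sub hg2 (hg.const_mul _), intervalIntegral.integral_const_mul,
        intervalIntegral.integral_const, smul_eq_mul]
      ring
    rw [← hexpand]
    exact intervalIntegral.integral_nonneg hab fun _ _ => sq_nonneg _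
  have := discrim_le_zero hquad
  rw [discrim] at this
  nlinarith

lemma integral_le_of_le_two_mul {f g : ℝ → ℝ} (hf : Continuous f) (hg : Continuous g)
    {T : ℝ} (hT : 0 ≤ T) (hfg : ∀ s ∈ Icc (-T) 0, f s ≤ 2 * (g s + T * ∫ r in -T..0, g r)) :
    ∫ s in -T..0, f s ≤ (2 + 2 * T ^ 2) * ∫ s in -T..0, g s := by
  have hT' : -T ≤ 0 := neg_nonpos.mpr hT
  calc ∫ s in -T..0, f s ≤ ∫ s in -T..0, 2 * (g s + T * ∫ r in -T..0, g r) :=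
        intervalIntegral.integral_mono_on hT' (hf.intervalIntegrable _ _)
          ((continuous_const.mul (hg.add continuous_const)).intervalIntegrable _ _) hfg
    _ = (2 + 2 * T ^ 2) * ∫ s in -T..0, g s := by
        rw [intervalIntegral.integral_const_mul, intervalIntegral.integral_add
          (hg.intervalIntegrable _ _) intervalIntegrable_const, intervalIntegral.integral_const,
          smul_eq_mul]
        ring

lemma le_sqrt_mul_sqrt_of_sq_le {x y K : ℝ} (hx : 0 ≤ x) (hK : 0 ≤ K) (h : x ^ 2 ≤ K * y) :
    x ≤ √K * √y := by
  rw [← Real.sqrt_mul hK, ← Real.sqrt_sq hx]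
  exact Real.sqrt_le_sqrt h

lemma norm_add_sq_le_two_mul {E : Type*} [SeminormedAddCommGroup E] (u v : E) :
    ‖u + v‖ ^ 2 ≤ 2 * (‖u‖ ^ 2 + ‖v‖ ^ 2) :=
  (pow_le_pow_left₀ (norm_nonneg _) (norm_add_le u v) 2).trans add_sq_le

section

variable {E : Type*} [NormedAddCommGroup E] [NormedSpace ℝ E]

lemma norm_intervalIntegral_sq_le {f : ℝ → E} {g : ℝ → ℝ} {a b : ℝ} (hab : a ≤ b)
    (hg : IntervalIntegrable g volume a b) (hg2 : IntervalIntegrable (fun x => g x ^ 2) volume a b)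
    (hfg : ∀ x ∈ Ioc a b, ‖f x‖ ≤ g x) :
    ‖∫ x in a..b, f x‖ ^ 2 ≤ (b - a) * ∫ x in a..b, g x ^ 2 :=
  (pow_le_pow_left₀ (norm_nonneg _)
    (intervalIntegral.norm_integral_le_of_norm_le hab (ae_of_all _ hfg) hg) 2).trans
    (sq_intervalIntegral_le hab hg hg2)

lemma norm_intervalIntegral_sq_le_of_mem_Icc {f : ℝ → E} {g : ℝ → ℝ} (hg : Continuous g)
    {T s : ℝ} (hs : s ∈ Icc (-T) 0) (hfg : ∀ x ∈ Ioc s 0, ‖f x‖ ≤ g x) :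
    ‖∫ x in s..0, f x‖ ^ 2 ≤ T * ∫ x in -T..0, g x ^ 2 := by
  have hg2 := (hg.pow 2).intervalIntegrable (μ := volume)
  calc ‖∫ x in s..0, f x‖ ^ 2 ≤ (0 - s) * ∫ x in s..0, g x ^ 2 :=
        norm_intervalIntegral_sq_le hs.2 (hg.intervalIntegrable _ _) (hg2 _ _) hfg
    _ ≤ T * ∫ x in -T..0, g x ^ 2 :=
        mul_le_mul (by linarith [hs.1])
          (intervalIntegral.integral_mono_interval hs.1 hs.2 le_rfl
            (ae_of_all _ fun _ => sq_nonneg _) (hg2 _ _))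
          (intervalIntegral.integral_nonneg hs.2 fun _ _ => sq_nonneg _) (by linarith [hs.1, hs.2])

lemma norm_exp_smul_sq (s : ℝ) (x : E) : ‖exp s • x‖ ^ 2 = exp (2 * s) * ‖x‖ ^ 2 := by
  rw [norm_smul, norm_of_nonneg (exp_pos s).le, mul_pow, ← exp_nat_mul]
  norm_num

lemma integrableOn_norm_sq_exp_smul_add {u : ℝ → E}
    (hu : AEStronglyMeasurable u (volume.restrict (Iio 0)))
    (hu2 : IntegrableOn (fun s => ‖u s‖ ^ 2) (Iio 0)) (x : E) :
    IntegrableOn (fun s => ‖exp s • x + u s‖ ^ 2) (Iio 0) := by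
  have hexp : IntegrableOn (fun s => exp (2 * s) * ‖x‖ ^ 2) (Iio 0) :=
    ((integrableOn_exp_mul_Iic two_pos 0).mono_set Iio_subset_Iic_self).mul_const _
  refine ((hexp.add hu2).const_mul 2).mono'
    (((continuous_exp.smul continuous_const).aestronglyMeasurable.add hu).norm.pow 2)
    (ae_of_all _ fun s => ?_)
  rw [norm_of_nonneg (sq_nonneg _), Pi.add_apply, ← norm_exp_smul_sq]
  exact norm_add_sq_le_two_mul _ _

lemma integral_norm_sq_exp_smul_add_le {u : ℝ → E}
    (hu : AEStronglyMeasurable u (volume.restrict (Iio 0)))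
    (hu2 : IntegrableOn (fun s => ‖u s‖ ^ 2) (Iio 0)) (x : E) :
    ∫ s in Iio 0, ‖exp s • x + u s‖ ^ 2
      ≤ ‖x‖ ^ 2 + 2 * ∫ s in Iio 0, ‖u s‖ ^ 2 := by
  have hexp : IntegrableOn (fun s => exp (2 * s) * ‖x‖ ^ 2) (Iio 0) :=
    ((integrableOn_exp_mul_Iic two_pos 0).mono_set Iio_subset_Iic_self).mul_const _
  calc ∫ s in Iio 0, ‖exp s • x + u s‖ ^ 2
      ≤ ∫ s in Iio 0, 2 * (exp (2 * s) * ‖x‖ ^ 2 + ‖u s‖ ^ 2) := by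
        refine setIntegral_mono_on (integrableOn_norm_sq_exp_smul_add hu hu2 x)
          ((hexp.add hu2).const_mul 2) measurableSet_Iio fun s _ => ?_
        rw [← norm_exp_smul_sq]
        exact norm_add_sq_le_two_mul _ _
    _ = ‖x‖ ^ 2 + 2 * ∫ s in Iio 0, ‖u s‖ ^ 2 := by
        rw [MeasureTheory.integral_const_mul, integral_add hexp hu2,
          MeasureTheory.integral_mul_const,
          ← integral_Iic_eq_integral_Iio, integral_exp_mul_Iic two_pos]
        simp only [mul_zero, exp_zero]
        ring

def revPrimitive (h : ℝ → E) (s : ℝ) : E := ∫ r in s..0, h r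

def expRevPrimitive (h : ℝ → E) (s : ℝ) : E := ∫ r in s..0, exp (s - r) • h r

variable {h : ℝ → E}

lemma continuous_revPrimitive (hint : ∀ a b, IntervalIntegrable h volume a b) :
    Continuous (revPrimitive h) := by
  refine (intervalIntegral.continuous_primitive hint 0).neg.congr fun s => ?_
  rw [revPrimitive, intervalIntegral.integral_symm]
  rfl

lemma expRevPrimitive_eq_exp_smul_revPrimitive (h : ℝ → E) (s : ℝ) :
    expRevPrimitive h s = exp s • revPrimitive (fun r => exp (-r) • h r) s := by
  rw [expRevPrimitive, revPrimitive, ← intervalIntegral.integral_smul]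
  congr 1 with r
  rw [smul_smul, ← exp_add, sub_eq_add_neg]

lemma intervalIntegrable_exp_neg_smul (hint : ∀ a b, IntervalIntegrable h volume a b)
    (a b : ℝ) :
    IntervalIntegrable (fun r => exp (-r) • h r) volume a b :=
  (hint a b).continuousOn_smul (by fun_prop : Continuous fun r : ℝ => exp (-r)).continuousOn

lemma continuous_expRevPrimitive (hint : ∀ a b, IntervalIntegrable h volume a b) :
    Continuous (expRevPrimitive h) := by
  simp_rw [funext (expRevPrimitive_eq_exp_smul_revPrimitive h)]
  exact continuous_exp.smul (continuous_revPrimitive (intervalIntegrable_exp_neg_smul hint))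

variable {T : ℝ}

lemma revPrimitive_of_le (hint : ∀ a b, IntervalIntegrable h volume a b)
    (hsupp : ∀ s ≤ -T, h s = 0) {s : ℝ} (hs : s ≤ -T) :
    revPrimitive h s = revPrimitive h (-T) := by
  have hzero : ∫ r in s..-T, h r = 0 := by
    rw [intervalIntegral.integral_congr (g := fun _ => (0 : E))
      fun r hr => hsupp r (uIcc_of_le hs ▸ hr).2]
    simp
  rw [revPrimitive,
    ← intervalIntegral.integral_add_adjacent_intervals (hint s (-T)) (hint (-T) 0),
    hzero, zero_add, revPrimitive]

lemma expRevPrimitive_of_le (hint : ∀ a b, IntervalIntegrable h volume a b)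
    (hsupp : ∀ s ≤ -T, h s = 0) {s : ℝ} (hs : s ≤ -T) :
    expRevPrimitive h s = exp (s + T) • expRevPrimitive h (-T) := by
  rw [expRevPrimitive_eq_exp_smul_revPrimitive, expRevPrimitive_eq_exp_smul_revPrimitive,
    revPrimitive_of_le (intervalIntegrable_exp_neg_smul hint)
      (fun r hr => by rw [hsupp r hr, smul_zero]) hs,
    smul_smul, ← exp_add]
  ring_nf

lemma norm_sq_expRevPrimitive_of_le (hint : ∀ a b, IntervalIntegrable h volume a b)
    (hsupp : ∀ s ≤ -T, h s = 0) {s : ℝ} (hs : s ≤ -T) :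
    ‖expRevPrimitive h s‖ ^ 2
      = exp (2 * s) * (exp (2 * T) * ‖expRevPrimitive h (-T)‖ ^ 2) := by
  rw [expRevPrimitive_of_le hint hsupp hs, norm_exp_smul_sq, mul_add, exp_add, mul_assoc]

lemma integrableOn_norm_sq_expRevPrimitive_Iio (hint : ∀ a b, IntervalIntegrable h volume a b)
    (hsupp : ∀ s ≤ -T, h s = 0) :
    IntegrableOn (fun s => ‖expRevPrimitive h s‖ ^ 2) (Iio (-T)) :=
  IntegrableOn.congr_fun
    (((integrableOn_exp_mul_Iic two_pos (-T)).mono_set Iio_subset_Iic_self).mul_const _)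
    (fun _ hs => (norm_sq_expRevPrimitive_of_le hint hsupp (le_of_lt hs)).symm) measurableSet_Iio

lemma setIntegral_norm_sq_expRevPrimitive_Iio (hint : ∀ a b, IntervalIntegrable h volume a b)
    (hsupp : ∀ s ≤ -T, h s = 0) :
    ∫ s in Iio (-T), ‖expRevPrimitive h s‖ ^ 2 = ‖expRevPrimitive h (-T)‖ ^ 2 / 2 := by
  rw [setIntegral_congr_fun measurableSet_Iio
      fun s hs => norm_sq_expRevPrimitive_of_le hint hsupp (le_of_lt hs),
    MeasureTheory.integral_mul_const, ← integral_Iic_eq_integral_Iio,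
    integral_exp_mul_Iic two_pos, ← mul_assoc, div_mul_eq_mul_div, ← exp_add]
  ring_nf
  rw [exp_zero, one_mul]

lemma integrableOn_norm_sq_expRevPrimitive (hT : 0 ≤ T)
    (hint : ∀ a b, IntervalIntegrable h volume a b) (hsupp : ∀ s ≤ -T, h s = 0) :
    IntegrableOn (fun s => ‖expRevPrimitive h s‖ ^ 2) (Iio 0) := by
  rw [← Iio_union_Ico_eq_Iio (neg_nonpos.mpr hT)]
  exact (integrableOn_norm_sq_expRevPrimitive_Iio hint hsupp).union
    ((((continuous_expRevPrimitive hint).norm.pow 2).integrableOn_Icc).mono_set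
      Ico_subset_Icc_self)

lemma integral_norm_sq_expRevPrimitive (hT : 0 ≤ T)
    (hint : ∀ a b, IntervalIntegrable h volume a b) (hsupp : ∀ s ≤ -T, h s = 0) :
    ∫ s in Iio 0, ‖expRevPrimitive h s‖ ^ 2
      = ‖expRevPrimitive h (-T)‖ ^ 2 / 2 + ∫ s in -T..0, ‖expRevPrimitive h s‖ ^ 2 := by
  rw [← Iio_union_Ico_eq_Iio (neg_nonpos.mpr hT), setIntegral_union
      (Iio_disjoint_Ici le_rfl |>.mono_right Ico_subset_Ici_self) measurableSet_Ico
      (integrableOn_norm_sq_expRevPrimitive_Iio hint hsupp)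
      ((((continuous_expRevPrimitive hint).norm.pow 2).integrableOn_Icc).mono_set
        Ico_subset_Icc_self),
    setIntegral_norm_sq_expRevPrimitive_Iio hint hsupp, setIntegral_congr_set Ico_ae_eq_Ioc,
    ← intervalIntegral.integral_of_le (neg_nonpos.mpr hT)]

variable [CompleteSpace E]

lemma hasDerivAt_revPrimitive (hint : ∀ a b, IntervalIntegrable h volume a b)
    (hcont : ContinuousOn h (Iio 0)) {y : ℝ} (hy : y < 0) :
    HasDerivAt (revPrimitive h) (-h y) y :=
  intervalIntegral.integral_hasDerivAt_left (hint y 0)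
    (hcont.stronglyMeasurableAtFilter isOpen_Iio y hy) (hcont.continuousAt (Iio_mem_nhds hy))

lemma hasDerivAt_expRevPrimitive (hint : ∀ a b, IntervalIntegrable h volume a b)
    (hcont : ContinuousOn h (Iio 0)) {y : ℝ} (hy : y < 0) :
    HasDerivAt (expRevPrimitive h) (expRevPrimitive h y - h y) y := by
  have hP := hasDerivAt_revPrimitive (intervalIntegrable_exp_neg_smul hint)
    ((by fun_prop : Continuous fun r : ℝ => exp (-r)).continuousOn.smul hcont) hy
  convert (hasDerivAt_exp y).smul hP using 1
  · exact funext (expRevPrimitive_eq_exp_smul_revPrimitive h)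
  · rw [expRevPrimitive_eq_exp_smul_revPrimitive, smul_neg, smul_smul, ← exp_add, add_neg_cancel,
      exp_zero, one_smul]
    abel

lemma eq_revPrimitive_of_hasDerivAt {F f : ℝ → E} (hF : Continuous F) (hF0 : F 0 = 0)
    (hf : Continuous f) (hderiv : ∀ y < 0, HasDerivAt F (-f y) y) {s : ℝ} (hs : s ≤ 0) :
    F s = revPrimitive f s := by
  have := intervalIntegral.integral_eq_sub_of_hasDeriv_right_of_le hs hF.continuousOn
    (fun y hy => (hderiv y hy.2).hasDerivWithinAt) (hf.neg.intervalIntegrable _ _)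
  rw [intervalIntegral.integral_neg, hF0, zero_sub, neg_inj] at this
  exact this.symm

lemma revPrimitive_sub_expRevPrimitive_eq_revPrimitive
    (hint : ∀ a b, IntervalIntegrable h volume a b)
    (hcont : ContinuousOn h (Iio 0)) {s : ℝ} (hs : s ≤ 0) :
    revPrimitive h s - expRevPrimitive h s = revPrimitive (expRevPrimitive h) s := by
  refine eq_revPrimitive_of_hasDerivAt (F := fun y => revPrimitive h y - expRevPrimitive h y)
    ((continuous_revPrimitive hint).sub (continuous_expRevPrimitive hint)) ?_
    (continuous_expRevPrimitive hint) (fun y hy => ?_) hs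
  · simp [revPrimitive, expRevPrimitive]
  · exact ((hasDerivAt_revPrimitive hint hcont hy).sub
      (hasDerivAt_expRevPrimitive hint hcont hy)).congr_deriv (by abel)

lemma revPrimitive_sub_expRevPrimitive_eq_expRevPrimitive
    (hint : ∀ a b, IntervalIntegrable h volume a b)
    (hcont : ContinuousOn h (Iio 0)) {s : ℝ} (hs : s ≤ 0) :
    revPrimitive h s - expRevPrimitive h s = expRevPrimitive (revPrimitive h) s := by
  have hK := (continuous_revPrimitive hint).sub (continuous_expRevPrimitive hint)
  have hexp : Continuous fun y : ℝ => exp (-y) := by fun_prop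
  have hweighted := eq_revPrimitive_of_hasDerivAt
    (F := fun y => exp (-y) • (revPrimitive h y - expRevPrimitive h y))
    (f := fun r => exp (-r) • revPrimitive h r) (hexp.smul hK)
    (by simp [revPrimitive, expRevPrimitive])
    (hexp.smul (continuous_revPrimitive hint)) (fun y hy => ?_) hs
  · rw [expRevPrimitive_eq_exp_smul_revPrimitive (revPrimitive h), ← hweighted, smul_smul,
      ← exp_add, add_neg_cancel, exp_zero, one_smul]
  -- `(e^{-y} (H - J))' = -e^{-y} H` because `(H - J)' = -J`
  · have hK' := (hasDerivAt_revPrimitive hint hcont hy).sub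
      (hasDerivAt_expRevPrimitive hint hcont hy)
    exact ((hasDerivAt_neg y).exp.smul hK').congr_deriv (by rw [Pi.sub_apply]; module)

lemma norm_sq_revPrimitive_le (hint : ∀ a b, IntervalIntegrable h volume a b)
    (hcont : ContinuousOn h (Iio 0)) {s : ℝ} (hs : s ∈ Icc (-T) 0) :
    ‖revPrimitive h s‖ ^ 2
      ≤ 2 * (‖expRevPrimitive h s‖ ^ 2
        + T * ∫ r in -T..0, ‖expRevPrimitive h r‖ ^ 2) := by
  rw [← sub_add_cancel (revPrimitive h s) (expRevPrimitive h s),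
    revPrimitive_sub_expRevPrimitive_eq_revPrimitive hint hcont hs.2, add_comm]
  refine (norm_add_sq_le_two_mul _ _).trans ?_
  gcongr
  exact norm_intervalIntegral_sq_le_of_mem_Icc (continuous_expRevPrimitive hint).norm hs
    fun _ _ => le_rfl

lemma norm_sq_expRevPrimitive_le (hint : ∀ a b, IntervalIntegrable h volume a b)
    (hcont : ContinuousOn h (Iio 0)) {s : ℝ} (hs : s ∈ Icc (-T) 0) :
    ‖expRevPrimitive h s‖ ^ 2
      ≤ 2 * (‖revPrimitive h s‖ ^ 2 + T * ∫ r in -T..0, ‖revPrimitive h r‖ ^ 2) := by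
  rw [← sub_sub_cancel (revPrimitive h s) (expRevPrimitive h s),
    revPrimitive_sub_expRevPrimitive_eq_expRevPrimitive hint hcont hs.2, sub_eq_add_neg]
  refine (norm_add_sq_le_two_mul _ _).trans ?_
  rw [norm_neg]
  gcongr
  refine norm_intervalIntegral_sq_le_of_mem_Icc (continuous_revPrimitive hint).norm hs
    fun r hr => ?_
  rw [norm_smul, norm_of_nonneg (exp_pos _).le]
  exact mul_le_of_le_one_left (norm_nonneg _) (exp_le_one_iff.mpr (by linarith [hr.1]))

lemma sqrt_norm_sq_add_integral_le (hT : 0 ≤ T) (hint : ∀ a b, IntervalIntegrable h volume a b)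
    (hcont : ContinuousOn h (Iio 0)) (hsupp : ∀ s ≤ -T, h s = 0) (x : E) :
    √(‖x‖ ^ 2 + ∫ s in Iio 0, ‖exp s • x + expRevPrimitive h s‖ ^ 2)
      ≤ √(4 + 2 * T + 4 * T ^ 2)
        * (‖x‖ + ‖revPrimitive h (-T)‖
          + √(∫ s in -T..0, ‖revPrimitive h s‖ ^ 2)) := by
  -- `|x|_B² ≤ 2‖x‖² + 2‖J‖²`, and `‖J‖² = |J(-T)|² / 2 + ‖J‖²_{L²(-T,0)}` is controlled by `H`
  have hT' : -T ∈ Icc (-T) 0 := ⟨le_rfl, neg_nonpos.mpr hT⟩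
  have hq := integral_norm_sq_exp_smul_add_le
    (continuous_expRevPrimitive hint).aestronglyMeasurable
    (integrableOn_norm_sq_expRevPrimitive hT hint hsupp) x
  have hj := integral_norm_sq_expRevPrimitive hT hint hsupp
  have hJT := norm_sq_expRevPrimitive_le hint hcont hT'
  have hjT := integral_le_of_le_two_mul (f := fun s => ‖expRevPrimitive h s‖ ^ 2)
    (g := fun s => ‖revPrimitive h s‖ ^ 2) ((continuous_expRevPrimitive hint).norm.pow 2)
    ((continuous_revPrimitive hint).norm.pow 2) hT
    fun s hs => norm_sq_expRevPrimitive_le hint hcont hs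
  have hd := intervalIntegral.integral_nonneg (μ := volume) (neg_nonpos.mpr hT)
    fun s _ => sq_nonneg ‖revPrimitive h s‖
  set d := ∫ s in -T..0, ‖revPrimitive h s‖ ^ 2
  set r := √d
  have ha := norm_nonneg x
  have hc := norm_nonneg (revPrimitive h (-T))
  have hsum := add_nonneg (add_nonneg ha hc) (Real.sqrt_nonneg d)
  refine le_sqrt_mul_sqrt_of_sq_le (Real.sqrt_nonneg _) (by positivity) ?_ |>.trans_eq
    (congrArg _ (Real.sqrt_sq hsum))
  rw [Real.sq_sqrt (add_nonneg (sq_nonneg _) (setIntegral_nonneg measurableSet_Iio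
    fun _ _ => sq_nonneg _))]
  calc ‖x‖ ^ 2 + ∫ s in Iio 0, ‖exp s • x + expRevPrimitive h s‖ ^ 2
      ≤ (4 + 2 * T + 4 * T ^ 2) * (‖x‖ ^ 2 + ‖revPrimitive h (-T)‖ ^ 2 + r ^ 2) := by
        nlinarith [Real.sq_sqrt hd, mul_nonneg hT hd, sq_nonneg T, sq_nonneg ‖x‖,
          sq_nonneg ‖revPrimitive h (-T)‖]
    _ ≤ (4 + 2 * T + 4 * T ^ 2) * (‖x‖ + ‖revPrimitive h (-T)‖ + r) ^ 2 := by
        gcongr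
        nlinarith [mul_nonneg ha hc, mul_nonneg ha (Real.sqrt_nonneg d),
          mul_nonneg hc (Real.sqrt_nonneg d)]

lemma le_sqrt_norm_sq_add_integral (hT : 0 ≤ T) (hint : ∀ a b, IntervalIntegrable h volume a b)
    (hcont : ContinuousOn h (Iio 0)) (hsupp : ∀ s ≤ -T, h s = 0) (x : E) :
    ‖x‖ + ‖revPrimitive h (-T)‖ + √(∫ s in -T..0, ‖revPrimitive h s‖ ^ 2)
      ≤ √(24 + 12 * T + 12 * T ^ 2)
        * √(‖x‖ ^ 2 + ∫ s in Iio 0, ‖exp s • x + expRevPrimitive h s‖ ^ 2) := by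
  -- `H` is controlled by `‖J‖²`, and `‖J‖² ≤ ‖x‖² + 2‖e^s x + J‖²`
  have hJ := continuous_expRevPrimitive hint
  have hJ2 := integrableOn_norm_sq_expRevPrimitive hT hint hsupp
  have hjq := integral_norm_sq_exp_smul_add_le (u := fun s => exp s • x + expRevPrimitive h s)
    ((continuous_exp.smul continuous_const).add hJ).aestronglyMeasurable
    (integrableOn_norm_sq_exp_smul_add hJ.aestronglyMeasurable hJ2 x) (-x)
  simp only [smul_neg, neg_add_cancel_left, norm_neg] at hjq
  have hj := integral_norm_sq_expRevPrimitive hT hint hsupp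
  have hc2 := norm_sq_revPrimitive_le hint hcont ⟨le_rfl, neg_nonpos.mpr hT⟩
  have hdT := integral_le_of_le_two_mul (f := fun s => ‖revPrimitive h s‖ ^ 2)
    (g := fun s => ‖expRevPrimitive h s‖ ^ 2) ((continuous_revPrimitive hint).norm.pow 2)
    (hJ.norm.pow 2) hT fun s hs => norm_sq_revPrimitive_le hint hcont hs
  have hjT := intervalIntegral.integral_nonneg (μ := volume) (neg_nonpos.mpr hT)
    fun s _ => sq_nonneg ‖expRevPrimitive h s‖
  have hd := intervalIntegral.integral_nonneg (μ := volume) (neg_nonpos.mpr hT)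
    fun s _ => sq_nonneg ‖revPrimitive h s‖
  set j := ∫ s in Iio 0, ‖expRevPrimitive h s‖ ^ 2
  set jT := ∫ s in -T..0, ‖expRevPrimitive h s‖ ^ 2
  set d := ∫ s in -T..0, ‖revPrimitive h s‖ ^ 2
  set q := ∫ s in Iio 0, ‖exp s • x + expRevPrimitive h s‖ ^ 2
  have hq : 0 ≤ q := setIntegral_nonneg measurableSet_Iio fun _ _ => sq_nonneg _
  have hjTj : jT ≤ j := by nlinarith [sq_nonneg ‖expRevPrimitive h (-T)‖]
  have hcd : ‖revPrimitive h (-T)‖ ^ 2 + d ≤ (4 + 2 * T + 2 * T ^ 2) * j := by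
    nlinarith [mul_le_mul_of_nonneg_left hjTj hT,
      mul_le_mul_of_nonneg_left hjTj (sq_nonneg T)]
  refine le_sqrt_mul_sqrt_of_sq_le (by positivity) (by positivity) ?_
  calc (‖x‖ + ‖revPrimitive h (-T)‖ + √d) ^ 2
      ≤ 3 * (‖x‖ ^ 2 + ‖revPrimitive h (-T)‖ ^ 2 + d) := by
        nlinarith [Real.sq_sqrt hd, sq_nonneg (‖x‖ - ‖revPrimitive h (-T)‖),
          sq_nonneg (‖x‖ - √d),
          sq_nonneg (‖revPrimitive h (-T)‖ - √d)]
    _ ≤ 3 * (‖x‖ ^ 2 + (4 + 2 * T + 2 * T ^ 2) * (‖x‖ ^ 2 + 2 * q)) := by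
        have := mul_le_mul_of_nonneg_left hjq (by positivity : (0:ℝ) ≤ 4 + 2 * T + 2 * T ^ 2)
        linarith
    _ ≤ (24 + 12 * T + 12 * T ^ 2) * (‖x‖ ^ 2 + q) := by
        nlinarith [mul_nonneg hT (sq_nonneg ‖x‖), mul_nonneg (sq_nonneg T) (sq_nonneg ‖x‖),
          sq_nonneg ‖x‖]

end

section Paths

variable {m : ℕ} {T : ℝ}

lemma IccExtend_path_of_nonpos (hT : 0 ≤ T) (ω : PathSp m T) {x : ℝ} (hx : x ≤ 0) :
    IccExtend hT ω.1 x = 0 := by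
  rw [IccExtend_of_le_left hT _ hx]
  exact ω.2 _ rfl

lemma ev_eq_IccExtend (hT : 0 ≤ T) (ω : PathSp m T) {x : ℝ} (hx : x ∈ Icc 0 T) :
    ev ω x = IccExtend hT ω.1 x := by
  rw [ev, dif_pos hx, IccExtend_of_mem _ _ hx]

lemma continuous_IccExtend_path (hT : 0 ≤ T) (ω : PathSp m T) : Continuous (IccExtend hT ω.1) :=
  continuous_IccExtend_iff.mpr ω.1.continuous

lemma liftSnd_eq_indicator (hT : 0 ≤ T) (t : Icc (0:ℝ) T) (ω : PathSp m T) :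
    liftSnd t ω = (Iic 0).indicator fun s => IccExtend hT ω.1 (s + t) := by
  -- the extension of `ω` vanishes on `(-∞, 0]` as `ω 0 = 0`, which absorbs the cut-off at `-t`
  funext s
  by_cases hs : s ≤ 0
  · rw [indicator_of_mem (mem_Iic.mpr hs), liftSnd]
    split_ifs with hts
    · exact ev_eq_IccExtend hT ω ⟨by linarith [hts.1], by linarith [t.2.2]⟩
    · refine (IccExtend_path_of_nonpos hT ω ?_).symm
      have : s < -t := by by_contra! h; exact hts ⟨h, hs⟩
      linarith
  · rw [indicator_of_notMem (fun h => hs (mem_Iic.mp h)), liftSnd, if_neg fun h => hs h.2]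

lemma intervalIntegrable_liftSnd (hT : 0 ≤ T) (t : Icc (0:ℝ) T) (ω : PathSp m T) (a b : ℝ) :
    IntervalIntegrable (liftSnd t ω) volume a b := by
  rw [liftSnd_eq_indicator hT, intervalIntegrable_iff]
  exact ((((continuous_IccExtend_path hT ω).comp (continuous_add_const _)).intervalIntegrable
    a b).def'.indicator measurableSet_Iic)

lemma continuousOn_liftSnd (hT : 0 ≤ T) (t : Icc (0:ℝ) T) (ω : PathSp m T) :
    ContinuousOn (liftSnd t ω) (Iio 0) := by
  rw [liftSnd_eq_indicator hT]
  exact ((continuous_IccExtend_path hT ω).comp (continuous_add_const _)).continuousOn.congr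
    fun s hs => indicator_of_mem (mem_Iic.mpr (le_of_lt hs)) _

lemma liftSnd_of_le (hT : 0 ≤ T) (t : Icc (0:ℝ) T) (ω : PathSp m T) {s : ℝ} (hs : s ≤ -T) :
    liftSnd t ω s = 0 := by
  rw [liftSnd_eq_indicator hT, indicator_of_mem (mem_Iic.mpr (hs.trans (neg_nonpos.mpr hT)))]
  exact IccExtend_path_of_nonpos hT ω (by linarith [t.2.2])

lemma integral_liftSnd (hT : 0 ≤ T) (t : Icc (0:ℝ) T) (ω : PathSp m T) {ρ : ℝ}
    (hρ : 0 ≤ ρ) :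
    ∫ r in -ρ..0, liftSnd t ω r = ∫ r in max (t - ρ) 0..t, ev ω r := by
  have hg := continuous_IccExtend_path hT ω
  have hmax : max ((t : ℝ) - ρ) 0 ≤ t := max_le (by linarith) t.2.1
  have hhead : ∫ r in (t - ρ)..max (t - ρ) 0, IccExtend hT ω.1 r = 0 := by
    rcases le_total 0 ((t : ℝ) - ρ) with h | h
    · rw [max_eq_left h, intervalIntegral.integral_same]
    · rw [max_eq_right h, intervalIntegral.integral_congr (g := fun _ => (0 : Em m))
        fun r hr => IccExtend_path_of_nonpos hT ω (uIcc_of_le h ▸ hr).2]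
      simp
  calc ∫ r in -ρ..0, liftSnd t ω r = ∫ r in -ρ..0, IccExtend hT ω.1 (r + t) := by
        refine intervalIntegral.integral_congr fun r hr => ?_
        rw [liftSnd_eq_indicator hT, indicator_of_mem (uIcc_of_le (neg_nonpos.mpr hρ) ▸ hr).2]
    _ = ∫ r in (t - ρ)..t, IccExtend hT ω.1 r := by
        rw [intervalIntegral.integral_comp_add_right, zero_add, neg_add_eq_sub]
    _ = ∫ r in max (t - ρ) 0..t, IccExtend hT ω.1 r := by
        rw [← intervalIntegral.integral_add_adjacent_intervals (hg.intervalIntegrable _ _)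
          (hg.intervalIntegrable _ t), hhead, zero_add]
    _ = ∫ r in max (t - ρ) 0..t, ev ω r := by
        refine intervalIntegral.integral_congr fun r hr => ?_
        rw [uIcc_of_le hmax] at hr
        exact (ev_eq_IccExtend hT ω ⟨(le_max_right _ _).trans hr.1, hr.2.trans t.2.2⟩).symm

lemma revPrimitive_liftSnd_sub (hT : 0 ≤ T) (t₁ t₂ : Icc (0:ℝ) T) (ω₁ ω₂ : PathSp m T)
    {ρ : ℝ} (hρ : 0 ≤ ρ) :
    revPrimitive (fun s => liftSnd t₁ ω₁ s - liftSnd t₂ ω₂ s) (-ρ)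
      = (∫ r in max (t₁ - ρ) 0..t₁, ev ω₁ r)
        - ∫ r in max (t₂ - ρ) 0..t₂, ev ω₂ r := by
  rw [revPrimitive, intervalIntegral.integral_sub (intervalIntegrable_liftSnd hT t₁ ω₁ _ _)
    (intervalIntegrable_liftSnd hT t₂ ω₂ _ _), integral_liftSnd hT t₁ ω₁ hρ,
    integral_liftSnd hT t₂ ω₂ hρ]

lemma dBmetric_eq (hT : 0 ≤ T) (t₁ t₂ : Icc (0:ℝ) T) (ω₁ ω₂ : PathSp m T) :
    dBmetric (t₁, ω₁) (t₂, ω₂)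
      = |(t₁ : ℝ) - t₂| + (‖ev ω₁ t₁ - ev ω₂ t₂‖
      + ‖revPrimitive (fun s => liftSnd t₁ ω₁ s - liftSnd t₂ ω₂ s) (-T)‖
      + √(∫ s in -T..0,
          ‖revPrimitive (fun s => liftSnd t₁ ω₁ s - liftSnd t₂ ω₂ s) s‖ ^ 2)) := by
  have hsup : ∀ t : Icc (0:ℝ) T, max ((t : ℝ) - T) 0 = 0 :=
    fun t => max_eq_right (by linarith [t.2.2])
  have hterm₃ : (∫ r in 0..t₁, ev ω₁ r) - ∫ r in 0..t₂, ev ω₂ r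
      = revPrimitive (fun s => liftSnd t₁ ω₁ s - liftSnd t₂ ω₂ s) (-T) := by
    rw [revPrimitive_liftSnd_sub hT t₁ t₂ ω₁ ω₂ hT, hsup, hsup]
  have hterm₄ : ∫ ρ in 0..T,
        ‖(∫ r in max (t₁ - ρ) 0..t₁, ev ω₁ r) - ∫ r in max (t₂ - ρ) 0..t₂, ev ω₂ r‖ ^ 2
      = ∫ s in -T..0,
          ‖revPrimitive (fun s => liftSnd t₁ ω₁ s - liftSnd t₂ ω₂ s) s‖ ^ 2 := by
    have hflip := intervalIntegral.integral_comp_neg (a := 0) (b := T)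
      fun s => ‖revPrimitive (fun s => liftSnd t₁ ω₁ s - liftSnd t₂ ω₂ s) s‖ ^ 2
    rw [neg_zero] at hflip
    rw [← hflip]
    refine intervalIntegral.integral_congr fun ρ hρ => ?_
    rw [revPrimitive_liftSnd_sub hT t₁ t₂ ω₁ ω₂ (uIcc_of_le hT ▸ hρ).1]
  simp only [dBmetric]
  rw [hterm₃, hterm₄]
  ring

end Paths

section Limits

variable {α : Type*} {l : Filter α} {f g : α → ℝ}

lemma tendsto_zero_iff_of_le_mul {C C' : ℝ} (hf : ∀ n, 0 ≤ f n) (hg : ∀ n, 0 ≤ g n)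
    (hfg : ∀ n, f n ≤ C * g n) (hgf : ∀ n, g n ≤ C' * f n) :
    Tendsto f l (𝓝 0) ↔ Tendsto g l (𝓝 0) :=
  ⟨fun h => squeeze_zero hg hgf (by simpa using h.const_mul C'),
    fun h => squeeze_zero hf hfg (by simpa using h.const_mul C)⟩

lemma tendsto_add_zero_iff_of_nonneg (hf : ∀ n, 0 ≤ f n) (hg : ∀ n, 0 ≤ g n) :
    Tendsto (fun n => f n + g n) l (𝓝 0) ↔ Tendsto f l (𝓝 0) ∧ Tendsto g l (𝓝 0) :=
  ⟨fun h => ⟨squeeze_zero hf (fun n => le_add_of_nonneg_right (hg n)) h,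
      squeeze_zero hg (fun n => le_add_of_nonneg_left (hf n)) h⟩,
    fun h => by simpa using h.1.add h.2⟩

end Limits

theorem stmt14_general (m : ℕ) (T : ℝ) (hT : 0 < T)
    (tn : ℕ → Set.Icc (0:ℝ) T) (ωn : ℕ → PathSp m T)
    (t : Set.Icc (0:ℝ) T) (ω : PathSp m T) :
    (Tendsto (fun n => ((tn n : ℝ))) atTop (nhds (t : ℝ)) ∧
      Tendsto (fun n =>
          bNorm (ev (ωn n) (tn n : ℝ) - ev ω (t : ℝ))
            (fun s => liftSnd (tn n) (ωn n) s - liftSnd t ω s))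
        atTop (nhds 0)) ↔
    Tendsto (fun n => dBmetric (tn n, ωn n) (t, ω)) atTop (nhds 0) := by
  set x : ℕ → Em m := fun n => ev (ωn n) (tn n : ℝ) - ev ω (t : ℝ)
  set h : ℕ → ℝ → Em m := fun n s => liftSnd (tn n) (ωn n) s - liftSnd t ω s
  set S : ℕ → ℝ := fun n => ‖x n‖ + ‖revPrimitive (h n) (-T)‖
    + √(∫ s in -T..0, ‖revPrimitive (h n) s‖ ^ 2)
  have hint : ∀ n a b, IntervalIntegrable (h n) volume a b := fun n a b =>
    (intervalIntegrable_liftSnd hT.le _ _ a b).sub (intervalIntegrable_liftSnd hT.le t ω a b)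
  have hcont : ∀ n, ContinuousOn (h n) (Iio 0) := fun n =>
    (continuousOn_liftSnd hT.le _ _).sub (continuousOn_liftSnd hT.le t ω)
  have hsupp : ∀ n, ∀ s ≤ -T, h n s = 0 := fun n s hs => by
    simp only [h, liftSnd_of_le hT.le _ _ hs, sub_zero]
  have hbS : Tendsto (fun n => bNorm (x n) (h n)) atTop (𝓝 0) ↔ Tendsto S atTop (𝓝 0) :=
    tendsto_zero_iff_of_le_mul (fun n => Real.sqrt_nonneg _) (fun n => by positivity)
      (fun n => sqrt_norm_sq_add_integral_le hT.le (hint n) (hcont n) (hsupp n) (x n))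
      (fun n => le_sqrt_norm_sq_add_integral hT.le (hint n) (hcont n) (hsupp n) (x n))
  simp only [dBmetric_eq hT.le]
  rw [tendsto_add_zero_iff_of_nonneg (fun n => abs_nonneg _) (fun n => by positivity), ← hbS,
    tendsto_iff_norm_sub_tendsto_zero]
  rfl

/-- STATEMENT 14: with `x^n = (ω_n(t_n), ω_n(·+t_n)1_{[−t_n,0]})` and
`x = (ω(t), ω(·+t)1_{[−t,0]})`, one has `t_n → t` and `|x^n − x|_B → 0` if and only if
`d_B((t_n,ω_n),(t,ω)) → 0`. -/
theorem stmt14 (m : ℕ) (hm : 1 ≤ m) (T : ℝ) (hT : 0 < T)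
    (tn : ℕ → Set.Icc (0:ℝ) T) (ωn : ℕ → PathSp m T)
    (t : Set.Icc (0:ℝ) T) (ω : PathSp m T) :
    (Tendsto (fun n => ((tn n : ℝ))) atTop (nhds (t : ℝ)) ∧
      Tendsto (fun n =>
          bNorm (ev (ωn n) (tn n : ℝ) - ev ω (t : ℝ))
            (fun s => liftSnd (tn n) (ωn n) s - liftSnd t ω s))
        atTop (nhds 0)) ↔
    Tendsto (fun n => dBmetric (tn n, ωn n) (t, ω)) atTop (nhds 0) :=
  stmt14_general m T hT tn ωn t ω
end
end

section
/- Let f ∈ L²((0,T),ℝ^m) admit a representative of the form f(t) = c + ∫_0^t g(s) ds for a.e. t ∈ (0,T), for some c ∈ ℝ^m and g ∈ L²((0,T),ℝ^m) (i.e. f ∈ W^{1,2}((0,T),ℝ^m)). Then the convolution functional F : Θ → ℝ, F(t,ω) := ∫_0^t ⟨f(r), ω(t−r)⟩ dr, is d_B-continuous: F(θ_n) → F(θ) whenever d_B(θ_n,θ) → 0. -/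
noncomputable section

open MeasureTheory Filter

/-- The convolution functional `F(t,ω) = ∫_0^t ⟨f(r), ω(t−r)⟩ dr`. -/
def convF {m : ℕ} {T : ℝ} (f : ℝ → Em m) (θ : ThetaSp m T) : ℝ :=
  ∫ r in (0:ℝ)..(θ.1 : ℝ), (inner ℝ (f r) (ev θ.2 ((θ.1 : ℝ) - r)) : ℝ)

/-! Writing `f = c + G` with `G(r) = ∫₀ʳ g` and exchanging the order of integration over the
triangle `0 < s ≤ r ≤ t` gives
`F(t, ω) = ⟨c + ∫₀ᵀ g, ∫₀ᵗ ω⟩ - ∫₀ᵀ ⟨g(s), ∫_{(t-s)∨0}^t ω⟩ ds`.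
The right-hand side is linear in the two quantities whose differences are the last two summands
of `d_B`, so by Cauchy–Schwarz `F` is Lipschitz for `d_B` with constant `‖c + ∫₀ᵀ g‖ + ‖g‖_{L²}`.
-/

open Set intervalIntegral
open scoped RealInnerProductSpace

section InnerProduct

variable {X E : Type*} [MeasurableSpace X] {μ : Measure X}
  [NormedAddCommGroup E] [InnerProductSpace ℝ E]

theorem MeasureTheory.IntegrableOn.inner_continuousOn_of_subset [TopologicalSpace X]
    [OpensMeasurableSpace X] [SecondCountableTopologyEither X E] {g u : X → E} {A K : Set X}
    (hg : IntegrableOn g A μ) (hu : ContinuousOn u K) (hA : MeasurableSet A) (hK : IsCompact K) (hAK : A ⊆ K) :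
    IntegrableOn (fun x => ⟪g x, u x⟫) A μ := by
  obtain ⟨C, hC⟩ := hK.exists_bound_of_continuousOn hu
  exact (innerSL ℝ).integrable_of_bilin_of_bdd_right C hg
    ((hu.mono hAK).aestronglyMeasurable hA) (ae_restrict_of_forall_mem hA fun x hx => hC x (hAK hx))

theorem MeasureTheory.MemLp.integrable_inner {f h : X → E} (hf : MemLp f 2 μ) (hh : MemLp h 2 μ) :
    Integrable (fun x => ⟪f x, h x⟫) μ :=
  memLp_one_iff_integrable.1 ((innerSL ℝ).memLp_of_bilin 1 hf hh)

theorem abs_integral_inner_le_sqrt_mul_sqrt {f h : X → E} (hf : MemLp f 2 μ) (hh : MemLp h 2 μ) :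
    |∫ x, ⟪f x, h x⟫ ∂μ| ≤ √(∫ x, ‖f x‖ ^ 2 ∂μ) * √(∫ x, ‖h x‖ ^ 2 ∂μ) := by
  have holder := integral_mul_norm_le_Lp_mul_Lq Real.HolderConjugate.two_two
    (by simpa using hf) (by simpa using hh)
  simp only [Real.rpow_two, ← Real.sqrt_eq_rpow] at holder
  have hprod : Integrable (fun x => ‖f x‖ * ‖h x‖) μ := hf.norm.integrable_mul hh.norm
  rw [← Real.norm_eq_abs]
  exact (norm_integral_le_of_norm_le hprod (ae_of_all _ fun x => norm_inner_le_norm _ _)).trans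
    holder

variable [CompleteSpace E]

theorem intervalIntegral_inner_primitive_swap {g v : ℝ → E} {a b : ℝ} (hab : a ≤ b)
    (hg : IntegrableOn g (Ioc a b)) (hv : IntegrableOn v (Ioc a b)) :
    ∫ r in a..b, ⟪∫ s in a..r, g s, v r⟫ = ∫ s in a..b, ⟪g s, ∫ r in s..b, v r⟫ := by
  set ν := volume.restrict (Ioc a b)
  set F : ℝ → ℝ → ℝ := fun r s => (Iic r).indicator (fun s => ⟪g s, v r⟫) s
  have hF : Integrable (Function.uncurry F) (ν.prod ν) := by
    have hprod : Integrable (fun p : ℝ × ℝ => ⟪g p.2, v p.1⟫) (ν.prod ν) :=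
      Integrable.op_fst_snd (op := fun x y => ⟪y, x⟫) (continuous_inner.comp continuous_swap)
        ⟨1, fun x y => by rw [one_mul, mul_comm]; exact norm_inner_le_norm y x⟩ hv hg
    exact hprod.indicator (measurableSet_le measurable_snd measurable_fst)
  have head_eq : ∀ r ∈ Ioc a b, ⟪∫ s in a..r, g s, v r⟫ = ∫ s, F r s ∂ν := by
    intro r hr
    rw [setIntegral_indicator measurableSet_Iic, Ioc_inter_Iic, min_eq_right hr.2,
      integral_of_le hr.1.le, real_inner_comm, ← integral_inner (hg.mono_set
        (Ioc_subset_Ioc_right hr.2))]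
    simp_rw [real_inner_comm]
  have tail_eq : ∀ s ∈ Ioc a b, ⟪g s, ∫ r in s..b, v r⟫ = ∫ r, F r s ∂ν := by
    intro s hs
    have hmem : (fun r => F r s) = (Ici s).indicator (fun r => ⟪g s, v r⟫) := by
      ext r; simp [F, indicator_apply]
    have hIcc : Ioc a b ∩ Ici s = Icc s b := by
      ext r; simp only [mem_inter_iff, mem_Ioc, mem_Ici, mem_Icc]
      constructor
      · rintro ⟨⟨-, hrb⟩, hsr⟩; exact ⟨hsr, hrb⟩
      · rintro ⟨hsr, hrb⟩; exact ⟨⟨hs.1.trans_le hsr, hrb⟩, hsr⟩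
    rw [hmem, setIntegral_indicator measurableSet_Ici, hIcc, integral_Icc_eq_integral_Ioc,
      integral_of_le hs.2, ← integral_inner (hv.mono_set (Ioc_subset_Ioc_left hs.1.le))]
  rw [integral_of_le hab, integral_of_le hab, setIntegral_congr_fun measurableSet_Ioc head_eq,
    setIntegral_congr_fun measurableSet_Ioc tail_eq]
  exact integral_integral_swap hF

end InnerProduct

section Paths

variable {m : ℕ} {T : ℝ}

theorem ev_eq_indicator (hT : 0 ≤ T) (ω : PathSp m T) :
    ev ω = (Icc 0 T).indicator (ω.val ∘ projIcc 0 T hT) := by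
  ext1 r
  by_cases hr : r ∈ Icc 0 T
  · simp [ev, hr, projIcc_of_mem hT hr]
  · simp [ev, hr]

theorem integrable_ev (hT : 0 ≤ T) (ω : PathSp m T) : Integrable (ev ω) := by
  rw [ev_eq_indicator hT, integrable_indicator_iff measurableSet_Icc]
  exact (ω.val.continuous.comp continuous_projIcc).integrableOn_Icc

theorem ev_of_nonpos (ω : PathSp m T) {r : ℝ} (hr : r ≤ 0) : ev ω r = 0 := by
  unfold ev
  split_ifs with h
  · exact ω.2 _ (le_antisymm hr h.1)
  · rfl

theorem intervalIntegral_ev_of_nonpos (ω : PathSp m T) {x : ℝ} (hx : x ≤ 0) :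
    ∫ r in (0:ℝ)..x, ev ω r = 0 := by
  rw [integral_congr (g := fun _ => 0) fun r hr => ev_of_nonpos ω (uIcc_of_ge hx ▸ hr).2]
  exact intervalIntegral.integral_zero

def pathIntegral (θ : ThetaSp m T) : Em m :=
  ∫ r in (0:ℝ)..θ.1, ev θ.2 r

def windowIntegral (θ : ThetaSp m T) (ρ : ℝ) : Em m :=
  ∫ r in (max (θ.1 - ρ) 0)..θ.1, ev θ.2 r

def lagIntegral (θ : ThetaSp m T) (s : ℝ) : Em m :=
  ∫ r in (0:ℝ)..(θ.1 - s), ev θ.2 r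

theorem lagIntegral_eq_pathIntegral_sub_windowIntegral (θ : ThetaSp m T) (s : ℝ) :
    lagIntegral θ s = pathIntegral θ - windowIntegral θ s := by
  have hT : 0 ≤ T := θ.1.2.1.trans θ.1.2.2
  rw [lagIntegral, pathIntegral, windowIntegral]
  rcases le_total 0 (θ.1 - s) with hs | hs
  · rw [max_eq_left hs, eq_sub_iff_add_eq, integral_add_adjacent_intervals
      (integrable_ev hT _).intervalIntegrable (integrable_ev hT _).intervalIntegrable]
  · rw [max_eq_right hs, sub_self, intervalIntegral_ev_of_nonpos _ hs]

theorem lagIntegral_of_le (θ : ThetaSp m T) {s : ℝ} (hs : θ.1 ≤ s) : lagIntegral θ s = 0 :=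
  intervalIntegral_ev_of_nonpos _ (sub_nonpos.2 hs)

theorem integral_ev_reflect (θ : ThetaSp m T) (s : ℝ) :
    ∫ r in s..θ.1, ev θ.2 (θ.1 - r) = lagIntegral θ s := by
  rw [integral_comp_sub_left, sub_self, lagIntegral]

theorem continuous_lagIntegral (θ : ThetaSp m T) : Continuous (lagIntegral θ) :=
  (continuous_primitive (fun _ _ => (integrable_ev (θ.1.2.1.trans θ.1.2.2) _).intervalIntegrable)
    0).comp (continuous_const.sub continuous_id)

theorem continuous_windowIntegral (θ : ThetaSp m T) : Continuous (windowIntegral θ) := by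
  have hwindow : windowIntegral θ = fun s => pathIntegral θ - lagIntegral θ s := by
    ext1 s
    rw [lagIntegral_eq_pathIntegral_sub_windowIntegral, sub_sub_cancel]
  rw [hwindow]
  exact continuous_const.sub (continuous_lagIntegral θ)

theorem memLp_windowIntegral (θ : ThetaSp m T) (p : ENNReal) :
    MemLp (windowIntegral θ) p (volume.restrict (Ioc 0 T)) := by
  obtain ⟨C, hC⟩ := isCompact_Icc.exists_bound_of_continuousOn
    (continuous_windowIntegral θ).continuousOn (s := Icc 0 T)
  exact MemLp.of_bound (continuous_windowIntegral θ).aestronglyMeasurable C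
    (ae_restrict_of_forall_mem measurableSet_Ioc fun s hs => hC s (Ioc_subset_Icc_self hs))

theorem dBmetric_eq_s10 (θ θ' : ThetaSp m T) : dBmetric θ θ' =
    |(θ.1 : ℝ) - θ'.1| + ‖ev θ.2 θ.1 - ev θ'.2 θ'.1‖ + ‖pathIntegral θ - pathIntegral θ'‖ +
      √(∫ ρ in (0:ℝ)..T, ‖windowIntegral θ ρ - windowIntegral θ' ρ‖ ^ 2) :=
  rfl

theorem norm_pathIntegral_sub_le_dBmetric (θ θ' : ThetaSp m T) :
    ‖pathIntegral θ - pathIntegral θ'‖ ≤ dBmetric θ θ' := by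
  rw [dBmetric_eq_s10]
  linarith [abs_nonneg ((θ.1 : ℝ) - θ'.1), norm_nonneg (ev θ.2 θ.1 - ev θ'.2 θ'.1),
    Real.sqrt_nonneg (∫ ρ in (0:ℝ)..T, ‖windowIntegral θ ρ - windowIntegral θ' ρ‖ ^ 2)]

theorem sqrt_integral_windowIntegral_sub_le_dBmetric (θ θ' : ThetaSp m T) :
    √(∫ ρ in (0:ℝ)..T, ‖windowIntegral θ ρ - windowIntegral θ' ρ‖ ^ 2) ≤ dBmetric θ θ' := by
  rw [dBmetric_eq_s10]
  linarith [abs_nonneg ((θ.1 : ℝ) - θ'.1), norm_nonneg (ev θ.2 θ.1 - ev θ'.2 θ'.1),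
    norm_nonneg (pathIntegral θ - pathIntegral θ')]

end Paths

section Convolution

variable {m : ℕ} {T : ℝ} {f g : ℝ → Em m} {c : Em m}

theorem convF_eq_integral_inner_primitive
    (hfg : ∀ᵐ r ∂volume.restrict (Ioc 0 T), f r = c + ∫ s in (0:ℝ)..r, g s) (θ : ThetaSp m T) :
    convF f θ = ∫ r in (0:ℝ)..θ.1, ⟪c + ∫ s in (0:ℝ)..r, g s, ev θ.2 (θ.1 - r)⟫ := by
  rw [convF, integral_of_le θ.1.2.1, integral_of_le θ.1.2.1]
  refine integral_congr_ae ?_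
  filter_upwards [ae_restrict_of_ae_restrict_of_subset (Ioc_subset_Ioc_right θ.1.2.2) hfg]
    with r hr
  rw [hr]

theorem integral_inner_lagIntegral_eq (hg : IntegrableOn g (Ioc 0 T)) (θ : ThetaSp m T) :
    ∫ s in (0:ℝ)..θ.1, ⟪g s, lagIntegral θ s⟫ = ∫ s in (0:ℝ)..T, ⟪g s, lagIntegral θ s⟫ := by
  have ht : (θ.1 : ℝ) ∈ uIcc 0 T := mem_uIcc_of_le θ.1.2.1 θ.1.2.2
  have hint : IntervalIntegrable (fun s => ⟪g s, lagIntegral θ s⟫) volume 0 T :=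
    (intervalIntegrable_iff_integrableOn_Ioc_of_le (θ.1.2.1.trans θ.1.2.2)).2 <|
      hg.inner_continuousOn_of_subset (continuous_lagIntegral θ).continuousOn measurableSet_Ioc
        isCompact_Icc Ioc_subset_Icc_self
  have htail : ∀ s ∈ uIcc (θ.1 : ℝ) T, ⟪g s, lagIntegral θ s⟫ = 0 := fun s hs => by
    rw [lagIntegral_of_le θ (uIcc_of_le θ.1.2.2 ▸ hs).1, inner_zero_right]
  rw [← integral_add_adjacent_intervals (b := θ.1)
      (hint.mono_set (uIcc_subset_uIcc left_mem_uIcc ht))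
      (hint.mono_set (uIcc_subset_uIcc ht right_mem_uIcc)),
    integral_congr (g := fun _ => 0) htail, intervalIntegral.integral_zero, add_zero]

theorem convF_eq_inner_add_integral_inner_lagIntegral (hg : IntegrableOn g (Ioc 0 T))
    (hfg : ∀ᵐ r ∂volume.restrict (Ioc 0 T), f r = c + ∫ s in (0:ℝ)..r, g s) (θ : ThetaSp m T) :
    convF f θ = ⟪c, pathIntegral θ⟫ + ∫ s in (0:ℝ)..T, ⟪g s, lagIntegral θ s⟫ := by
  have hT : 0 ≤ T := θ.1.2.1.trans θ.1.2.2
  set t : ℝ := θ.1.1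
  have ht0 : 0 ≤ t := θ.1.2.1
  set v : ℝ → Em m := fun r => ev θ.2 (t - r)
  have hv : Integrable v := (integrable_ev hT θ.2).comp_sub_left t
  have hgt : IntegrableOn g (Ioc 0 t) := hg.mono_set (Ioc_subset_Ioc_right θ.1.2.2)
  have hG : ContinuousOn (fun r => ∫ s in (0:ℝ)..r, g s) (Icc 0 t) := by
    rw [← uIcc_of_le ht0]
    exact continuousOn_primitive_interval
      (uIcc_of_le ht0 ▸ (integrableOn_Icc_iff_integrableOn_Ioc).2 hgt)
  have hGv : IntervalIntegrable (fun r => ⟪∫ s in (0:ℝ)..r, g s, v r⟫) volume 0 t :=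
    (intervalIntegrable_iff_integrableOn_Ioc_of_le ht0).2 <|
      (hv.integrableOn.inner_continuousOn_of_subset hG measurableSet_Ioc isCompact_Icc
        Ioc_subset_Icc_self).congr (ae_of_all _ fun r => real_inner_comm _ _)
  have hcv : ∫ r in (0:ℝ)..t, ⟪c, v r⟫ = ⟪c, ∫ r in (0:ℝ)..t, v r⟫ :=
    (innerSL ℝ c).intervalIntegral_comp_comm hv.intervalIntegrable
  have hv_int : ∫ r in (0:ℝ)..t, v r = pathIntegral θ := by
    rw [integral_ev_reflect, lagIntegral, sub_zero, pathIntegral]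
  rw [convF_eq_integral_inner_primitive hfg, ← integral_inner_lagIntegral_eq hg]
  simp_rw [inner_add_left]
  rw [integral_add (hv.const_inner c).intervalIntegrable hGv, hcv, hv_int,
    intervalIntegral_inner_primitive_swap ht0 hgt hv.integrableOn]
  exact congrArg _ (integral_congr fun s _ => congrArg _ (integral_ev_reflect θ s))

theorem convF_eq (hg : IntegrableOn g (Ioc 0 T))
    (hfg : ∀ᵐ r ∂volume.restrict (Ioc 0 T), f r = c + ∫ s in (0:ℝ)..r, g s) (θ : ThetaSp m T) :
    convF f θ = ⟪c + ∫ s in (0:ℝ)..T, g s, pathIntegral θ⟫ -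
      ∫ s in (0:ℝ)..T, ⟪g s, windowIntegral θ s⟫ := by
  have hT : 0 ≤ T := θ.1.2.1.trans θ.1.2.2
  have hgI : ∫ s in (0:ℝ)..T, ⟪g s, pathIntegral θ⟫ = ⟪∫ s in (0:ℝ)..T, g s, pathIntegral θ⟫ :=
    ((innerSL ℝ).flip _).intervalIntegral_comp_comm
      ((intervalIntegrable_iff_integrableOn_Ioc_of_le hT).2 hg)
  have hgI_int : IntervalIntegrable (fun s => ⟪g s, pathIntegral θ⟫) volume 0 T :=
    (intervalIntegrable_iff_integrableOn_Ioc_of_le hT).2 (hg.inner_const _)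
  have hgH_int : IntervalIntegrable (fun s => ⟪g s, windowIntegral θ s⟫) volume 0 T :=
    (intervalIntegrable_iff_integrableOn_Ioc_of_le hT).2 <| hg.inner_continuousOn_of_subset
      (continuous_windowIntegral θ).continuousOn measurableSet_Ioc isCompact_Icc
      Ioc_subset_Icc_self
  simp_rw [convF_eq_inner_add_integral_inner_lagIntegral hg hfg,
    lagIntegral_eq_pathIntegral_sub_windowIntegral, inner_sub_right]
  rw [integral_sub hgI_int hgH_int, hgI, inner_add_left]
  ring

theorem abs_convF_sub_convF_le
    (hg : MemLp g 2 (volume.restrict (Ioc 0 T)))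
    (hfg : ∀ᵐ r ∂volume.restrict (Ioc 0 T), f r = c + ∫ s in (0:ℝ)..r, g s)
    (θ θ' : ThetaSp m T) :
    |convF f θ - convF f θ'| ≤
      (‖c + ∫ s in Ioc 0 T, g s‖ + √(∫ s in Ioc 0 T, ‖g s‖ ^ 2)) * dBmetric θ θ' := by
  have hT : 0 ≤ T := θ.1.2.1.trans θ.1.2.2
  have hg1 : IntegrableOn g (Ioc 0 T) := hg.integrable one_le_two
  set ΔH := fun s => windowIntegral θ s - windowIntegral θ' s
  have hΔH : MemLp ΔH 2 (volume.restrict (Ioc 0 T)) :=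
    (memLp_windowIntegral θ 2).sub (memLp_windowIntegral θ' 2)
  have hdiff : convF f θ - convF f θ' = ⟪c + ∫ s in Ioc 0 T, g s, pathIntegral θ - pathIntegral θ'⟫
      - ∫ s in Ioc 0 T, ⟪g s, ΔH s⟫ := by
    simp_rw [convF_eq hg1 hfg, ΔH, inner_sub_right, integral_of_le hT]
    rw [integral_sub (hg.integrable_inner (memLp_windowIntegral θ 2))
      (hg.integrable_inner (memLp_windowIntegral θ' 2))]
    ring
  have hI := norm_pathIntegral_sub_le_dBmetric θ θ'
  have hH := sqrt_integral_windowIntegral_sub_le_dBmetric θ θ'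
  rw [integral_of_le hT] at hH
  calc |convF f θ - convF f θ'|
      ≤ |⟪c + ∫ s in Ioc 0 T, g s, pathIntegral θ - pathIntegral θ'⟫|
        + |∫ s in Ioc 0 T, ⟪g s, ΔH s⟫| := hdiff ▸ abs_sub _ _
    _ ≤ ‖c + ∫ s in Ioc 0 T, g s‖ * ‖pathIntegral θ - pathIntegral θ'‖
        + √(∫ s in Ioc 0 T, ‖g s‖ ^ 2) * √(∫ s in Ioc 0 T, ‖ΔH s‖ ^ 2) :=
      add_le_add (abs_real_inner_le_norm _ _) (abs_integral_inner_le_sqrt_mul_sqrt hg hΔH)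
    _ ≤ _ := by rw [add_mul]; gcongr

end Convolution

theorem stmt15_general (m : ℕ) (T : ℝ)
    (f : ℝ → Em m)
    (c : Em m) (g : ℝ → Em m)
    (hg : MemLp g 2 (volume.restrict (Set.Ioo (0:ℝ) T)))
    (hfg : ∀ᵐ t ∂(volume.restrict (Set.Ioo (0:ℝ) T)), f t = c + ∫ s in (0:ℝ)..t, g s) :
    ∀ (θn : ℕ → ThetaSp m T) (θ : ThetaSp m T),
      Tendsto (fun n => dBmetric (θn n) θ) atTop (nhds 0) →
      Tendsto (fun n => convF f (θn n)) atTop (nhds (convF f θ)) := by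
  intro θn θ hθ
  rw [Measure.restrict_congr_set Ioo_ae_eq_Ioc] at hg hfg
  refine tendsto_iff_norm_sub_tendsto_zero.2 <| squeeze_zero (fun _ => norm_nonneg _)
    (fun n => abs_convF_sub_convF_le hg hfg (θn n) θ) ?_
  simpa using hθ.const_mul (‖c + ∫ s in Ioc 0 T, g s‖ + √(∫ s in Ioc 0 T, ‖g s‖ ^ 2))

/-- STATEMENT 15: if `f ∈ W^{1,2}((0,T),ℝ^m)` (i.e. `f(t) = c + ∫_0^t g(s) ds` a.e. with
`g ∈ L²`), then the convolution functional `F(t,ω) = ∫_0^t ⟨f(r), ω(t−r)⟩ dr` is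
`d_B`-continuous. -/
theorem stmt15 (m : ℕ) (hm : 1 ≤ m) (T : ℝ) (hT : 0 < T)
    (f : ℝ → Em m) (hf : MemLp f 2 (volume.restrict (Set.Ioo (0:ℝ) T)))
    (c : Em m) (g : ℝ → Em m)
    (hg : MemLp g 2 (volume.restrict (Set.Ioo (0:ℝ) T)))
    (hfg : ∀ᵐ t ∂(volume.restrict (Set.Ioo (0:ℝ) T)), f t = c + ∫ s in (0:ℝ)..t, g s) :
    ∀ (θn : ℕ → ThetaSp m T) (θ : ThetaSp m T),
      Tendsto (fun n => dBmetric (θn n) θ) atTop (nhds 0) →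
      Tendsto (fun n => convF f (θn n)) atTop (nhds (convF f θ)) :=
  stmt15_general m T f c g hg hfg
end
end
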